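/- arXiv:1011.6082 — 8 statements merged into one kernel-verified Lean document; each statement's English description precedes it below -/
import Mathlib

section
/- Let B ∈ {-1,1}^t and let R^0 = B, R^1, …, R^t = -B be a sequence of sign vectors such that for each k, R^{k-1} and R^k differ in exactly one coordinate l_k, and the coordinates l_1, …, l_t are pairwise distinct (hence a permutation of {1,…,t}). Then the t × t matrix M whose rows are R^0, R^1, …, R^{t-1} is nonsingular and |det M| = 2^{t-1}. -/
open Finset Matrix

/-!
Put `d k = R (k + 1) - R k`. Each `d k` is `±2` times the basis vector at `l k`, and the `l k`
are distinct, so the matrix with rows `d 0, …, d (t - 1)` is monomial with `|det| = 2 ^ t`.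
Subtracting from each row of `M` its predecessor leaves the rows `R 0, d 0, …, d (t - 2)`; as the
`d k` telescope to `R t - R 0 = -2 • R 0`, the first row is
`-(1/2) • (d (t - 1) + d 0 + ⋯ + d (t - 2))`, so `|det M| = 2 ^ t / 2`.
-/

namespace Matrix

variable {n R : Type*} [Fintype n] [DecidableEq n] [CommRing R]

theorem det_eq_sign_mul_prod_of_monomial (σ : Equiv.Perm n) (A : Matrix n n R)
    (hA : ∀ i j, j ≠ σ i → A i j = 0) :
    A.det = Equiv.Perm.sign σ * ∏ i, A i (σ i) := by
  have hdecomp : A = diagonal (fun i => A i (σ i)) * σ.permMatrix R := by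
    ext i j
    rw [diagonal_mul]
    by_cases hj : j = σ i
    · simp [hj, Equiv.Perm.permMatrix, PEquiv.toMatrix_apply]
    · simp [hA i j hj, Equiv.Perm.permMatrix, PEquiv.toMatrix_apply, Ne.symm hj]
  conv_lhs => rw [hdecomp, det_mul, det_diagonal, det_permutation, mul_comm]

end Matrix

theorem Fin.sum_univ_succ_sub_castSucc {M : Type*} [AddCommGroup M] {n : ℕ}
    (f : Fin (n + 1) → M) :
    ∑ i : Fin n, (f i.succ - f i.castSucc) = f (Fin.last n) - f 0 := by
  induction n with
  | zero => simp
  | succ n ih =>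
    rw [Fin.sum_univ_castSucc]
    simp only [Fin.succ_castSucc]
    rw [ih (fun i => f i.castSucc)]
    simp

lemma abs_sub_eq_two_of_ne {x y : ℝ} (hx : x = -1 ∨ x = 1) (hy : y = -1 ∨ y = 1)
    (hxy : x ≠ y) : |x - y| = 2 := by
  rcases hx with rfl | rfl <;> rcases hy with rfl | rfl <;> first | exact absurd rfl hxy | norm_num

def stepMatrix {m t : ℕ} (R : Fin (m + 1) → Fin t → ℝ) : Matrix (Fin m) (Fin t) ℝ :=
  of fun k j => R k.succ j - R k.castSucc j

theorem abs_det_stepMatrix {t : ℕ} (R : Fin (t + 1) → Fin t → ℝ)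
    (hsign : ∀ k j, R k j = -1 ∨ R k j = 1)
    (l : Fin t → Fin t) (hl : Function.Injective l)
    (hstep : ∀ (k : Fin t) (j : Fin t), R k.castSucc j ≠ R k.succ j ↔ j = l k) :
    |(stepMatrix R).det| = 2 ^ t := by
  let σ : Equiv.Perm (Fin t) := Equiv.ofBijective l hl.bijective_of_finite
  have hzero : ∀ k j, j ≠ σ k → stepMatrix R k j = 0 := fun k j hj =>
    sub_eq_zero.mpr (not_ne_iff.mp ((hstep k j).not.mpr hj)).symm
  have htwo : ∀ k, |stepMatrix R k (σ k)| = 2 := fun k =>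
    abs_sub_eq_two_of_ne (hsign _ _) (hsign _ _) (Ne.symm ((hstep k (l k)).mpr rfl))
  rw [det_eq_sign_mul_prod_of_monomial σ _ hzero, abs_mul, ← Int.cast_abs,
    Equiv.Perm.sign_abs, Int.cast_one, one_mul, Finset.abs_prod]
  simp [htwo]

theorem det_eq_neg_half_mul_det_stepMatrix_rotate {n : ℕ}
    (R : Fin (n + 2) → Fin (n + 1) → ℝ) (hR : R (Fin.last _) = -R 0) :
    (of fun i j : Fin (n + 1) => R i.castSucc j).det =
      -(1 / 2) * ((stepMatrix R).submatrix (finRotate (n + 1)).symm id).det := by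
  set N := (stepMatrix R).submatrix (finRotate (n + 1)).symm id
  have hsum : R 0 = ∑ i, (-(1 / 2) : ℝ) • N i := by
    have htel : ∑ i, N i = R (Fin.last _) - R 0 :=
      (Equiv.sum_comp (finRotate (n + 1)).symm (stepMatrix R)).trans
        (Fin.sum_univ_succ_sub_castSucc R)
    rw [← Finset.smul_sum (s := univ) (f := fun i => N i), htel, hR]
    module
  have hrot : ∀ i : Fin n, (finRotate (n + 1)).symm i.succ = i.castSucc := fun i => by
    rw [Equiv.symm_apply_eq, finRotate_apply, Fin.coeSucc_eq_succ]
  calc _ = (N.updateRow 0 (R 0)).det := by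
        refine det_eq_of_forall_row_eq_smul_add_pred (fun _ => 1) (fun j => by simp) ?_
        intro i j
        simp [N, stepMatrix, hrot]
    _ = -(1 / 2) * N.det := by rw [hsum, det_updateRow_sum, smul_eq_mul]

theorem stmt_2_general (t : ℕ) (ht : 0 < t)
    (B : Fin t → ℝ)
    (R : Fin (t + 1) → Fin t → ℝ)
    (hsign : ∀ k j, R k j = -1 ∨ R k j = 1)
    (hR0 : R 0 = B) (hRt : R (Fin.last t) = -B)
    (l : Fin t → Fin t) (hl : Function.Injective l)
    (hstep : ∀ (k : Fin t) (j : Fin t), R k.castSucc j ≠ R k.succ j ↔ j = l k) :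
    (Matrix.of fun i j : Fin t => R i.castSucc j).det ≠ 0 ∧
    |(Matrix.of fun i j : Fin t => R i.castSucc j).det| = 2 ^ (t - 1) := by
  obtain ⟨n, rfl⟩ := Nat.exists_eq_add_one_of_ne_zero ht.ne'
  have habs : |(Matrix.of fun i j : Fin (n + 1) => R i.castSucc j).det| = 2 ^ n := by
    rw [det_eq_neg_half_mul_det_stepMatrix_rotate R (by rw [hRt, hR0]), det_permute, abs_mul,
      abs_mul, ← Int.cast_abs, Equiv.Perm.sign_abs, abs_det_stepMatrix R hsign l hl hstep]
    ring
  exact ⟨abs_pos.mp (by rw [habs]; positivity), by simpa using habs⟩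

theorem stmt_2 (t : ℕ) (ht : 0 < t)
    (B : Fin t → ℝ) (hB : ∀ j, B j = -1 ∨ B j = 1)
    (R : Fin (t + 1) → Fin t → ℝ)
    (hsign : ∀ k j, R k j = -1 ∨ R k j = 1)
    (hR0 : R 0 = B) (hRt : R (Fin.last t) = -B)
    (l : Fin t → Fin t) (hl : Function.Injective l)
    (hstep : ∀ (k : Fin t) (j : Fin t), R k.castSucc j ≠ R k.succ j ↔ j = l k) :
    (Matrix.of fun i j : Fin t => R i.castSucc j).det ≠ 0 ∧
    |(Matrix.of fun i j : Fin t => R i.castSucc j).det| = 2 ^ (t - 1) :=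
  stmt_2_general t ht B R hsign hR0 hRt l hl hstep
end

section
/- Let B ∈ {-1,1}^t and let R^0 = B, R^1, …, R^t = -B be sign vectors such that R^{k-1} and R^k differ exactly in coordinate l_k, with l_1,…,l_t a permutation of {1,…,t}. Let M be the matrix with rows R^0,…,R^{t-1}. Then the i-th row of M^{-1} equals (1/2)·B(i)·(σ(k) - σ(k+1)) if i = l_k for some k < t, and equals (1/2)·B(i)·(σ(1) + σ(t)) if i = l_t, where σ(j) is the j-th standard basis row vector. -/
/-!
Coordinate `j` of `R^m` equals `B j` up to the step `l⁻¹ j` at which it flips and `-B j`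
afterwards, so `M = S P D` with `S` the staircase sign matrix (`S i c = 1` for `i ≤ c`, `-1`
otherwise), `P` the permutation matrix of `l` and `D = diag B`. As `D² = 1`,
`M⁻¹ = D P⁻¹ S⁻¹`, and `S⁻¹` is explicit: consecutive rows of `S` differ only in the diagonal
entry, by `2`, while the first and last rows sum to `2 σ(t)`.
-/

open Finset Matrix

section SignPath

variable {K ι : Type*} [Ring K] [DecidableEq ι] {n : ℕ}

lemma eq_neg_of_ne_of_sign {a b : K} (ha : a = -1 ∨ a = 1) (hb : b = -1 ∨ b = 1)
    (hab : a ≠ b) : b = -a := by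
  rcases ha with rfl | rfl <;> rcases hb with rfl | rfl <;> simp_all

variable {R : Fin (n + 1) → ι → K} {e : Fin n ≃ ι}

lemma signPath_succ_apply (hsign : ∀ k j, R k j = -1 ∨ R k j = 1)
    (hstep : ∀ k j, R k.castSucc j ≠ R k.succ j ↔ j = e k) (k : Fin n) (j : ι) :
    R k.succ j = if j = e k then -R k.castSucc j else R k.castSucc j := by
  split_ifs with hj
  · exact eq_neg_of_ne_of_sign (hsign _ _) (hsign _ _) ((hstep k j).2 hj)
  · exact (not_not.1 (mt (hstep k j).1 hj)).symm

lemma signPath_apply {B : ι → K} (hsign : ∀ k j, R k j = -1 ∨ R k j = 1) (hR0 : R 0 = B)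
    (hstep : ∀ k j, R k.castSucc j ≠ R k.succ j ↔ j = e k) (m : Fin (n + 1)) (j : ι) :
    R m j = if m ≤ (e.symm j).castSucc then B j else -B j := by
  induction m using Fin.induction with
  | zero => simp [hR0]
  | succ m ih =>
    rw [signPath_succ_apply hsign hstep, ih]
    by_cases hj : j = e m
    · subst hj
      simp [Fin.le_def]
    · have hm : e.symm j ≠ m := fun h => hj (by rw [← h, Equiv.apply_symm_apply])
      have : m.castSucc ≤ (e.symm j).castSucc ↔ m.succ ≤ (e.symm j).castSucc := by
        simp only [Fin.le_def, Fin.val_castSucc, Fin.val_succ]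
        have := Fin.val_ne_of_ne hm
        omega
      simp only [hj, if_false, this]

end SignPath

section Staircase

variable {K : Type*} [Field K] [NeZero (2 : K)] (n : ℕ)

def signStaircase : Matrix (Fin n) (Fin n) K :=
  of fun i c => if i ≤ c then 1 else -1

def signStaircaseInv : Matrix (Fin n) (Fin n) K :=
  of fun c j =>
    if (c : ℕ) + 1 < n then
      1 / 2 * ((if j = c then 1 else 0) - if (j : ℕ) = (c : ℕ) + 1 then 1 else 0)
    else
      1 / 2 * ((if (j : ℕ) = 0 then 1 else 0) + if (j : ℕ) = n - 1 then 1 else 0)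

lemma signStaircaseInv_mul_signStaircase :
    signStaircaseInv n * signStaircase n = (1 : Matrix (Fin n) (Fin n) K) := by
  ext c j
  rw [mul_apply, one_apply]
  by_cases hc : (c : ℕ) + 1 < n
  · have hsucc : ∀ x : Fin n, (x : ℕ) = c + 1 ↔ x = ⟨c + 1, hc⟩ := fun x => by rw [Fin.ext_iff]
    simp only [signStaircaseInv, of_apply, hc, if_true, hsucc, mul_sub, sub_mul, ite_mul, zero_mul,
      mul_ite, mul_one, mul_zero, sum_sub_distrib, sum_ite_eq', mem_univ]
    simp only [signStaircase, of_apply, Fin.le_def, Fin.ext_iff]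
    split_ifs <;> first | omega | (field_simp; norm_num)
  · have hlast : (c : ℕ) = n - 1 := by omega
    have hpos : 0 < n := by omega
    have h0 : ∀ x : Fin n, (x : ℕ) = 0 ↔ x = ⟨0, hpos⟩ := fun x => by rw [Fin.ext_iff]
    have h1 : ∀ x : Fin n, (x : ℕ) = n - 1 ↔ x = c := fun x => by rw [Fin.ext_iff, hlast]
    simp only [signStaircaseInv, of_apply, hc, if_false, h0, h1, mul_add, add_mul, ite_mul, zero_mul,
      mul_ite, mul_one, mul_zero, sum_add_distrib, sum_ite_eq', mem_univ, if_true]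
    simp only [signStaircase, of_apply, Fin.le_def, Fin.ext_iff]
    split_ifs <;> first | omega | (field_simp; norm_num)

end Staircase

lemma inv_submatrix_mul_diagonal {K m : Type*} [CommRing K] [Fintype m] [DecidableEq m]
    {S T : Matrix m m K} (hTS : T * S = 1) (e : m ≃ m) {B : m → K} (hB : ∀ j, B j * B j = 1) :
    (S.submatrix id e.symm * diagonal B)⁻¹ = diagonal B * T.submatrix e.symm id := by
  refine inv_eq_left_inv ?_
  calc diagonal B * T.submatrix e.symm id * (S.submatrix id e.symm * diagonal B)
      = diagonal B * (T * S).submatrix e.symm e.symm * diagonal B := by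
        rw [submatrix_mul _ _ _ id _ Function.bijective_id]
        simp only [Matrix.mul_assoc]
    _ = 1 := by
        rw [hTS, submatrix_one_equiv, Matrix.mul_one, diagonal_mul_diagonal]
        simp [hB]

theorem stmt_3_general (t : ℕ)
    (B : Fin t → ℝ) (hB : ∀ j, B j = -1 ∨ B j = 1)
    (R : Fin (t + 1) → Fin t → ℝ)
    (hsign : ∀ k j, R k j = -1 ∨ R k j = 1)
    (hR0 : R 0 = B)
    (l : Fin t → Fin t) (hl : Function.Bijective l)
    (hstep : ∀ (k : Fin t) (j : Fin t), R k.castSucc j ≠ R k.succ j ↔ j = l k) :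
    (∀ k : Fin t, (k : ℕ) + 1 < t → ∀ j : Fin t,
      (Matrix.of fun i j : Fin t => R i.castSucc j)⁻¹ (l k) j
        = 1 / 2 * B (l k) *
            ((if j = k then (1 : ℝ) else 0) - (if (j : ℕ) = (k : ℕ) + 1 then 1 else 0))) ∧
    (∀ k : Fin t, (k : ℕ) + 1 = t → ∀ j : Fin t,
      (Matrix.of fun i j : Fin t => R i.castSucc j)⁻¹ (l k) j
        = 1 / 2 * B (l k) *
            ((if (j : ℕ) = 0 then (1 : ℝ) else 0) + (if (j : ℕ) = t - 1 then 1 else 0))) := by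
  set e := Equiv.ofBijective l hl
  have hM : (Matrix.of fun i j : Fin t => R i.castSucc j)
      = (signStaircase t).submatrix id e.symm * diagonal B := by
    ext i j
    simp [signPath_apply (e := e) hsign hR0 hstep, signStaircase, Fin.castSucc_le_castSucc_iff]
  have hBB : ∀ j, B j * B j = 1 := fun j => by rcases hB j with h | h <;> norm_num [h]
  rw [hM, inv_submatrix_mul_diagonal (signStaircaseInv_mul_signStaircase t) e hBB]
  refine ⟨fun k hk j => ?_, fun k hk j => ?_⟩ <;>
    simp [diagonal_mul, signStaircaseInv, e, hk] <;> ring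

theorem stmt_3 (t : ℕ) (ht : 0 < t)
    (B : Fin t → ℝ) (hB : ∀ j, B j = -1 ∨ B j = 1)
    (R : Fin (t + 1) → Fin t → ℝ)
    (hsign : ∀ k j, R k j = -1 ∨ R k j = 1)
    (hR0 : R 0 = B) (hRt : R (Fin.last t) = -B)
    (l : Fin t → Fin t) (hl : Function.Bijective l)
    (hstep : ∀ (k : Fin t) (j : Fin t), R k.castSucc j ≠ R k.succ j ↔ j = l k) :
    (∀ k : Fin t, (k : ℕ) + 1 < t → ∀ j : Fin t,
      (Matrix.of fun i j : Fin t => R i.castSucc j)⁻¹ (l k) j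
        = 1 / 2 * B (l k) *
            ((if j = k then (1 : ℝ) else 0) - (if (j : ℕ) = (k : ℕ) + 1 then 1 else 0))) ∧
    (∀ k : Fin t, (k : ℕ) + 1 = t → ∀ j : Fin t,
      (Matrix.of fun i j : Fin t => R i.castSucc j)⁻¹ (l k) j
        = 1 / 2 * B (l k) *
            ((if (j : ℕ) = 0 then (1 : ℝ) else 0) + (if (j : ℕ) = t - 1 then 1 else 0))) :=
  stmt_3_general t B hB R hsign hR0 l hl hstep
end

section
/- With B, (R^0,…,R^t), M as above, define R^{k+t} := -R^k for 0 ≤ k ≤ t-1, giving the vertex set V(R) := {R^0,…,R^{2t-1}} of a symmetric cycle. Then for every T ∈ {-1,1}^t there exists a subset Q(T,R) ⊆ V(R) of odd cardinality consisting of linearly independent vectors such that T = Σ_{Q ∈ Q(T,R)} Q; explicitly Q(T,R) = {x_i · R^{i-1} : x_i ≠ 0} where x = T·M^{-1} ∈ {-1,0,1}^t. -/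
/-!
Column `l k` of the path is `B (l k)` up to row `k` and `-B (l k)` after it, so permuting the
columns of `M` by `l` and rescaling them by `B` turns `M` into the staircase matrix `S` (`1` on and
above the diagonal, `-1` below). Its inverse takes halved cyclic differences: with
`u k = B (l k) * T (l k) = ±1`, the solution of `x M = T` is `x k = (u k - u (k-1)) / 2` and
`x 0 = (u 0 + u (t-1)) / 2`, so `x ∈ {-1, 0, 1}^t`, and `∑ x = u (t-1) = ±1` forces an odd number
of nonzero entries. The rows of the invertible `M` are independent, hence so are the distinct
vectors `x i • R i` with `x i ≠ 0`, and they sum to `x M = T`.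
-/

open Finset Matrix

section

variable {K E ι : Type*} [Field K] [AddCommGroup E] [Module K E]

theorem LinearIndependent.linearIndepOn_smul {r : ι → E} (hr : LinearIndependent K r)
    (x : ι → K) : LinearIndepOn K (fun i => x i • r i) {i | x i ≠ 0} :=
  (hr.comp Subtype.val Subtype.val_injective).units_smul
    fun i : {i // x i ≠ 0} => Units.mk0 (x i) i.2

variable [DecidableEq K] [Fintype ι] [DecidableEq E]

theorem LinearIndependent.linearIndependent_image_smul {r : ι → E}
    (hr : LinearIndependent K r) (x : ι → K) :
    LinearIndependent K (fun q : {v // v ∈ ({i | x i ≠ 0} : Finset ι).image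
      fun i => x i • r i} => (q : E)) := by
  have h := (hr.linearIndepOn_smul x).id_image
  rwa [← Finset.coe_filter_univ, ← Finset.coe_image] at h

theorem LinearIndependent.sum_image_smul {r : ι → E} (hr : LinearIndependent K r)
    (x : ι → K) :
    ∑ q ∈ ({i | x i ≠ 0} : Finset ι).image (fun i => x i • r i), q = ∑ i, x i • r i := by
  rw [Finset.sum_image (by simpa using (hr.linearIndepOn_smul x).injOn)]
  exact Finset.sum_filter_of_ne fun i _ h hx => h (by rw [hx, zero_smul])

theorem LinearIndependent.card_image_smul {r : ι → E} (hr : LinearIndependent K r)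
    (x : ι → K) :
    #(({i | x i ≠ 0} : Finset ι).image fun i => x i • r i) = #{i | x i ≠ 0} :=
  Finset.card_image_of_injOn (by simpa using (hr.linearIndepOn_smul x).injOn)

theorem image_smul_subset_union_neg (r : ι → E) {x : ι → K}
    (hx : ∀ i, x i = -1 ∨ x i = 0 ∨ x i = 1) :
    ({i | x i ≠ 0} : Finset ι).image (fun i => x i • r i) ⊆
      univ.image r ∪ univ.image fun i => -r i := by
  intro q hq
  obtain ⟨i, hi, rfl⟩ := Finset.mem_image.mp hq
  rcases hx i with h | h | h
  · simp [h]
  · simp [h] at hi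
  · simp [h]

end

theorem Finset.odd_card_filter_ne_zero {ι : Type*} {s : Finset ι} {f : ι → ℝ}
    (hf : ∀ i ∈ s, f i = -1 ∨ f i = 0 ∨ f i = 1)
    (hs : ∑ i ∈ s, f i = -1 ∨ ∑ i ∈ s, f i = 1) : Odd #{i ∈ s | f i ≠ 0} := by
  have key : (#{i ∈ s | f i ≠ 0} : ℝ) = ∑ i ∈ s, f i + 2 * #{i ∈ s | f i = -1} := by
    simp only [Finset.card_filter, Nat.cast_sum, Nat.cast_ite, Nat.cast_one, Nat.cast_zero,
      Finset.mul_sum, ← Finset.sum_add_distrib]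
    refine Finset.sum_congr rfl fun i hi => ?_
    rcases hf i hi with h | h | h <;> norm_num [h]
  generalize #{i ∈ s | f i ≠ 0} = a, #{i ∈ s | f i = -1} = b at key
  rcases hs with h | h <;> rw [h] at key
  · have : a + 1 = 2 * b := by exact_mod_cast (by linarith : (a : ℝ) + 1 = 2 * b)
    exact ⟨b - 1, by omega⟩
  · exact ⟨b, by rw [add_comm]; exact_mod_cast key⟩

def staircase (n : ℕ) : Matrix (Fin n) (Fin n) ℝ := of fun i k => if i ≤ k then 1 else -1

/-- `k - 1` wraps around to `Fin.last n` at `k = 0`, where the sign of the second term flips. -/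
noncomputable def staircaseInv (n : ℕ) : Matrix (Fin (n + 1)) (Fin (n + 1)) ℝ :=
  of fun j k =>
    ((if j = k then 1 else 0) - (if k = 0 then -1 else 1) * (if j = k - 1 then 1 else 0)) / 2

theorem staircase_mul_staircaseInv (n : ℕ) : staircase (n + 1) * staircaseInv n = 1 := by
  ext i k
  have hsum : (staircase (n + 1) * staircaseInv n) i k =
      (staircase (n + 1) i k - staircase (n + 1) i (k - 1) * (if k = 0 then -1 else 1)) / 2 := by
    simp only [mul_apply, staircaseInv, of_apply, mul_div_assoc', ← Finset.sum_div, mul_sub,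
      Finset.sum_sub_distrib, mul_ite, mul_one, mul_zero, Finset.sum_ite_eq', Finset.mem_univ,
      if_true]
  rw [hsum, one_apply]
  have hk := Fin.coe_sub_one k
  simp only [staircase, of_apply, Fin.ext_iff, Fin.le_iff_val_le_val, Fin.val_zero] at hk ⊢
  have := i.isLt
  split_ifs at hk ⊢ <;> first | (exfalso; omega) | norm_num

theorem staircaseInv_mul_staircase (n : ℕ) : staircaseInv n * staircase (n + 1) = 1 :=
  mul_eq_one_comm.mp (staircase_mul_staircaseInv n)

theorem vecMul_staircaseInv_apply {n : ℕ} (u : Fin (n + 1) → ℝ) (k : Fin (n + 1)) :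
    (u ᵥ* staircaseInv n) k = (u k - u (k - 1) * (if k = 0 then -1 else 1)) / 2 := by
  simp only [vecMul, dotProduct, staircaseInv, of_apply, mul_div_assoc', ← Finset.sum_div,
    mul_sub, Finset.sum_sub_distrib, mul_ite, mul_one, mul_zero, Finset.sum_ite_eq',
    Finset.mem_univ, if_true]

theorem vecMul_staircaseInv_apply_eq_neg_one_or_zero_or_one {n : ℕ} {u : Fin (n + 1) → ℝ}
    (hu : ∀ k, u k = -1 ∨ u k = 1) (k : Fin (n + 1)) :
    (u ᵥ* staircaseInv n) k = -1 ∨ (u ᵥ* staircaseInv n) k = 0 ∨ (u ᵥ* staircaseInv n) k = 1 := by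
  rw [vecMul_staircaseInv_apply]
  rcases hu k with h | h <;> rcases hu (k - 1) with h' | h' <;> rw [h, h'] <;> split_ifs <;>
    norm_num

theorem sum_eq_vecMul_staircase_last {n : ℕ} (y : Fin (n + 1) → ℝ) :
    ∑ i, y i = (y ᵥ* staircase (n + 1)) (Fin.last n) := by
  simp [vecMul, dotProduct, staircase, Fin.le_last]

theorem sum_vecMul_staircaseInv {n : ℕ} (u : Fin (n + 1) → ℝ) :
    ∑ i, (u ᵥ* staircaseInv n) i = u (Fin.last n) := by
  rw [sum_eq_vecMul_staircase_last, vecMul_vecMul, staircaseInv_mul_staircase, vecMul_one]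

structure IsFlipPath {t : ℕ} (B : Fin t → ℝ) (R : Fin (t + 1) → Fin t → ℝ) (l : Fin t → Fin t) :
    Prop where
  sign : ∀ k j, R k j = -1 ∨ R k j = 1
  start : R 0 = B
  bijective : Function.Bijective l
  step : ∀ k j, R k.castSucc j ≠ R k.succ j ↔ j = l k

namespace IsFlipPath

section

variable {t : ℕ} {B : Fin t → ℝ} {R : Fin (t + 1) → Fin t → ℝ} {l : Fin t → Fin t}

theorem sign_start (h : IsFlipPath B R l) (j : Fin t) : B j = -1 ∨ B j = 1 :=
  h.start ▸ h.sign 0 j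

theorem apply_l (h : IsFlipPath B R l) (k : Fin t) (i : Fin (t + 1)) :
    R i (l k) = if i ≤ k.castSucc then B (l k) else -B (l k) := by
  induction i using Fin.induction with
  | zero => simp [h.start]
  | succ i ih =>
    by_cases hik : i = k
    · subst hik
      have hflip : R i.castSucc (l i) ≠ R i.succ (l i) := (h.step i (l i)).mpr rfl
      rw [ih, if_pos le_rfl] at hflip
      rw [if_neg (by simp [Fin.le_iff_val_le_val])]
      rcases h.sign i.succ (l i) with h1 | h1 <;> rcases h.sign_start (l i) with h2 | h2 <;>
        simp_all
    · have hfix : R i.castSucc (l k) = R i.succ (l k) := by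
        by_contra hne
        exact hik (h.bijective.injective ((h.step i (l k)).mp hne)).symm
      rw [← hfix, ih]
      have hik' : (i : ℕ) ≠ k := fun e => hik (Fin.ext e)
      simp only [Fin.le_iff_val_le_val, Fin.val_castSucc, Fin.val_succ]
      split_ifs <;> first | rfl | omega

theorem of_init_apply_l (h : IsFlipPath B R l) (i k : Fin t) :
    of (Fin.init R) i (l k) = B (l k) * staircase t i k := by
  simp only [of_apply, Fin.init, h.apply_l, Fin.castSucc_le_castSucc_iff, staircase]
  split_ifs <;> ring

theorem vecMul_of_init_apply_l (h : IsFlipPath B R l) (y : Fin t → ℝ) (k : Fin t) :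
    (y ᵥ* of (Fin.init R)) (l k) = B (l k) * (y ᵥ* staircase t) k := by
  simp only [vecMul, dotProduct, h.of_init_apply_l, Finset.mul_sum, mul_left_comm]

end

section

variable {n : ℕ} {B : Fin (n + 1) → ℝ} {R : Fin (n + 2) → Fin (n + 1) → ℝ}
  {l : Fin (n + 1) → Fin (n + 1)}

theorem vecMul_staircaseInv_vecMul (h : IsFlipPath B R l) (T : Fin (n + 1) → ℝ) :
    (fun k => B (l k) * T (l k)) ᵥ* staircaseInv n ᵥ* of (Fin.init R) = T := by
  funext j
  obtain ⟨k, rfl⟩ := h.bijective.surjective j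
  rw [h.vecMul_of_init_apply_l, vecMul_vecMul, staircaseInv_mul_staircase, vecMul_one,
    ← mul_assoc]
  rcases h.sign_start (l k) with hB | hB <;> simp [hB]

theorem isUnit_of_init (h : IsFlipPath B R l) : IsUnit (of (Fin.init R)) :=
  vecMul_surjective_iff_isUnit.mp fun T => ⟨_, h.vecMul_staircaseInv_vecMul T⟩

theorem vecMul_inv_of_init (h : IsFlipPath B R l) (T : Fin (n + 1) → ℝ) :
    T ᵥ* (of (Fin.init R))⁻¹ = (fun k => B (l k) * T (l k)) ᵥ* staircaseInv n := by
  conv_lhs => rw [← h.vecMul_staircaseInv_vecMul T]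
  rw [vecMul_vecMul, mul_nonsing_inv _ ((isUnit_iff_isUnit_det _).mp h.isUnit_of_init),
    vecMul_one]

end

end IsFlipPath

theorem stmt_5_general (t : ℕ) (ht : 0 < t)
    (B : Fin t → ℝ)
    (R : Fin (t + 1) → Fin t → ℝ)
    (hsign : ∀ k j, R k j = -1 ∨ R k j = 1)
    (hR0 : R 0 = B)
    (l : Fin t → Fin t) (hl : Function.Bijective l)
    (hstep : ∀ (k : Fin t) (j : Fin t), R k.castSucc j ≠ R k.succ j ↔ j = l k)
    (T : Fin t → ℝ) (hT : ∀ j, T j = -1 ∨ T j = 1)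
    (x : Fin t → ℝ)
    (hx : x = Matrix.vecMul T (Matrix.of fun i j : Fin t => R i.castSucc j)⁻¹)
    (V Q : Finset (Fin t → ℝ))
    (hV : V = (Finset.univ.image fun k : Fin t => R k.castSucc)
        ∪ (Finset.univ.image fun k : Fin t => -(R k.castSucc)))
    (hQ : Q = (Finset.univ.filter fun i : Fin t => x i ≠ 0).image
        fun i => x i • R i.castSucc) :
    Q ⊆ V ∧ Odd Q.card ∧
    LinearIndependent ℝ (fun q : {v // v ∈ Q} => (q : Fin t → ℝ)) ∧
    ∑ q ∈ Q, q = T := by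
  obtain ⟨n, rfl⟩ := Nat.exists_eq_add_one_of_ne_zero ht.ne'
  have hR : IsFlipPath B R l := ⟨hsign, hR0, hl, hstep⟩
  set u : Fin (n + 1) → ℝ := fun k => B (l k) * T (l k)
  have hu : ∀ k, u k = -1 ∨ u k = 1 := fun k => by
    rcases hR.sign_start (l k) with hB | hB <;> rcases hT (l k) with hT | hT <;> simp [u, hB, hT]
  have hxu : x = u ᵥ* staircaseInv n := hx.trans (hR.vecMul_inv_of_init T)
  have hrows : LinearIndependent ℝ (fun i : Fin (n + 1) => R i.castSucc) :=
    linearIndependent_rows_iff_isUnit.mpr hR.isUnit_of_init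
  have hval : ∀ i, x i = -1 ∨ x i = 0 ∨ x i = 1 :=
    hxu ▸ vecMul_staircaseInv_apply_eq_neg_one_or_zero_or_one hu
  subst hQ hV
  refine ⟨image_smul_subset_union_neg _ hval, ?_, hrows.linearIndependent_image_smul x, ?_⟩
  · rw [hrows.card_image_smul]
    refine Finset.odd_card_filter_ne_zero (fun i _ => hval i) ?_
    rw [hxu, sum_vecMul_staircaseInv]
    exact hu _
  · rw [hrows.sum_image_smul, ← hR.vecMul_staircaseInv_vecMul T, ← hxu]
    exact (vecMul_eq_sum x (of (Fin.init R))).symm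

theorem stmt_5 (t : ℕ) (ht : 0 < t)
    (B : Fin t → ℝ) (hB : ∀ j, B j = -1 ∨ B j = 1)
    (R : Fin (t + 1) → Fin t → ℝ)
    (hsign : ∀ k j, R k j = -1 ∨ R k j = 1)
    (hR0 : R 0 = B) (hRt : R (Fin.last t) = -B)
    (l : Fin t → Fin t) (hl : Function.Bijective l)
    (hstep : ∀ (k : Fin t) (j : Fin t), R k.castSucc j ≠ R k.succ j ↔ j = l k)
    (T : Fin t → ℝ) (hT : ∀ j, T j = -1 ∨ T j = 1)
    (x : Fin t → ℝ)
    (hx : x = Matrix.vecMul T (Matrix.of fun i j : Fin t => R i.castSucc j)⁻¹)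
    (V Q : Finset (Fin t → ℝ))
    (hV : V = (Finset.univ.image fun k : Fin t => R k.castSucc)
        ∪ (Finset.univ.image fun k : Fin t => -(R k.castSucc)))
    (hQ : Q = (Finset.univ.filter fun i : Fin t => x i ≠ 0).image
        fun i => x i • R i.castSucc) :
    Q ⊆ V ∧ Odd Q.card ∧
    LinearIndependent ℝ (fun q : {v // v ∈ Q} => (q : Fin t → ℝ)) ∧
    ∑ q ∈ Q, q = T :=
  stmt_5_general t ht B R hsign hR0 l hl hstep T hT x hx V Q hV hQ
end

section
/- With the notation above, for every T ∈ {-1,1}^t the set Q(T,R) has odd cardinality 2m+1 for some m ≥ 0, and its elements are linearly independent over ℝ. -/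
open Finset Matrix

/-! Column `l m` of `M` is `±R⁰_{l m}` with the sign switching right after row `m`, so
`(c ᵥ* M)_{l m} = R⁰_{l m} (2 (c_0 + ⋯ + c_m) - ∑ c)`. Hence `x ᵥ* M = T` says that all the
numbers `y_i = 2 (x_0 + ⋯ + x_{i-1}) - ∑ x` are `±1` (for `i = 0` because `y_0 = -y_t`). So each
`x_i = (y_{i+1} - y_i) / 2` lies in `{-1, 0, 1}`, and the nonzero ones are signs adding up to
`∑ x = y_t = ±1`: there is an odd number of them. The same formula with right-hand side `0`
forces all prefix sums of `c` to vanish, so `M` is invertible, and nonzero multiples of distinct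
rows of `M` are linearly independent. -/

lemma eq_neg_of_ne_of_signs {a b : ℝ} (ha : a = -1 ∨ a = 1) (hb : b = -1 ∨ b = 1) (h : a ≠ b) :
    b = -a := by
  rcases ha with rfl | rfl <;> rcases hb with rfl | rfl <;> norm_num at *

lemma Fin.partialSum_succ_eq_sum_Iic {t : ℕ} (c : Fin t → ℝ) (m : Fin t) :
    Fin.partialSum c m.succ = ∑ k ∈ Finset.Iic m, c k := by
  rw [Fin.partialSum, List.sum_take_ofFn]
  refine sum_congr (Finset.ext fun k => ?_) fun _ _ => rfl
  simp only [mem_filter, mem_univ, true_and, mem_Iic, Fin.le_def, Fin.val_succ]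
  omega

lemma Fin.partialSum_last {t : ℕ} (c : Fin t → ℝ) : Fin.partialSum c (Fin.last t) = ∑ k, c k := by
  rw [Fin.partialSum, List.sum_take_ofFn]
  simp

lemma walk_apply_eq_ite_of_flips {t : ℕ} {R : Fin (t + 1) → Fin t → ℝ} {l : Fin t → Fin t}
    (hsign : ∀ k j, R k j = -1 ∨ R k j = 1) (hl : Function.Injective l)
    (hstep : ∀ k j, R k.castSucc j ≠ R k.succ j ↔ j = l k) (m : Fin t) (i : Fin (t + 1)) :
    R i (l m) = if i ≤ m.castSucc then R 0 (l m) else -R 0 (l m) := by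
  induction i using Fin.induction with
  | zero => simp
  | succ k ih =>
    by_cases hkm : k = m
    · subst hkm
      have hflip := eq_neg_of_ne_of_signs (hsign _ _) (hsign _ _) ((hstep k (l k)).2 rfl)
      rw [hflip, ih, if_pos le_rfl, if_neg (not_le.2 Fin.castSucc_lt_succ)]
    · have hsame : R k.succ (l m) = R k.castSucc (l m) :=
        not_not.1 fun h => hkm (hl ((hstep k (l m)).1 (Ne.symm h))).symm
      rw [hsame, ih]
      have hle : k.castSucc ≤ m.castSucc ↔ k.succ ≤ m.castSucc := by
        simp only [Fin.le_def, Fin.val_castSucc, Fin.val_succ]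
        have := Fin.val_ne_of_ne hkm
        omega
      simp only [hle]

lemma exists_sum_eq_card_sub_two_mul {ι : Type*} (s : Finset ι) (f : ι → ℝ)
    (hf : ∀ i ∈ s, f i = -1 ∨ f i = 1) : ∃ k : ℤ, ∑ i ∈ s, f i = #s - 2 * k := by
  classical
  induction s using Finset.induction_on with
  | empty => exact ⟨0, by simp⟩
  | insert a s ha ih =>
    obtain ⟨k, hk⟩ := ih fun i hi => hf i (mem_insert_of_mem hi)
    rw [sum_insert ha, card_insert_of_notMem ha, hk]
    rcases hf a (mem_insert_self a s) with h | h
    · exact ⟨k + 1, by rw [h]; push_cast; ring⟩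
    · exact ⟨k, by rw [h]; push_cast; ring⟩

lemma odd_card_of_sum_eq_sign {ι : Type*} (s : Finset ι) (f : ι → ℝ)
    (hf : ∀ i ∈ s, f i = -1 ∨ f i = 1) (hsum : ∑ i ∈ s, f i = -1 ∨ ∑ i ∈ s, f i = 1) :
    Odd #s := by
  obtain ⟨k, hk⟩ := exists_sum_eq_card_sub_two_mul s f hf
  have hodd : Odd (#s : ℤ) := by
    rcases hsum with h | h
    · exact ⟨k - 1, by exact_mod_cast (by linarith : (#s : ℝ) = 2 * (k - 1) + 1)⟩
    · exact ⟨k, by exact_mod_cast (by linarith : (#s : ℝ) = 2 * k + 1)⟩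
  exact (Int.odd_coe_nat _).1 hodd

section Staircase

variable {t : ℕ} {M : Matrix (Fin t) (Fin t) ℝ} {l : Fin t → Fin t} {s : Fin t → ℝ}

lemma vecMul_apply_of_staircase (hM : ∀ k m, M k (l m) = if k ≤ m then s m else -s m)
    (c : Fin t → ℝ) (m : Fin t) :
    (c ᵥ* M) (l m) = s m * (2 * Fin.partialSum c m.succ - ∑ k, c k) := by
  have hterm : ∀ k, c k * M k (l m) = s m * (2 * (if k ≤ m then c k else 0) - c k) := by
    intro k
    rw [hM]
    split_ifs <;> ring
  simp only [vecMul, dotProduct, hterm, ← mul_sum, sum_sub_distrib, ← sum_filter,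
    filter_ge_eq_Iic, Fin.partialSum_succ_eq_sum_Iic]

lemma isUnit_of_staircase (hM : ∀ k m, M k (l m) = if k ≤ m then s m else -s m)
    (hs : ∀ m, s m ≠ 0) : IsUnit M := by
  rw [← vecMul_injective_iff_isUnit]
  suffices hker : ∀ c, c ᵥ* M = 0 → c = 0 from fun a b hab =>
    sub_eq_zero.1 (hker _ (by rw [sub_vecMul]; exact sub_eq_zero.2 hab))
  intro c hc
  have hhalf : ∀ m : Fin t, 2 * Fin.partialSum c m.succ = ∑ k, c k := fun m => by
    have := congrFun hc (l m)
    rw [vecMul_apply_of_staircase hM, Pi.zero_apply, mul_eq_zero] at this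
    exact sub_eq_zero.1 (this.resolve_left (hs m))
  cases t with
  | zero => exact Subsingleton.elim _ _
  | succ n =>
    have hsum : ∑ k, c k = 0 := by
      have := hhalf (Fin.last n)
      rw [Fin.succ_last, Fin.partialSum_last] at this
      linarith
    have hpartial : ∀ i, Fin.partialSum c i = 0 :=
      Fin.cases (Fin.partialSum_zero c) fun m => by linarith [hhalf m]
    funext j
    rw [← Fin.partialSum_right_neg c j, hpartial, hpartial, neg_zero, add_zero, Pi.zero_apply]

lemma two_mul_partialSum_sub_sum_sign (ht : 0 < t)
    (hM : ∀ k m, M k (l m) = if k ≤ m then s m else -s m) (hs : ∀ m, s m = -1 ∨ s m = 1)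
    {T x : Fin t → ℝ} (hT : ∀ j, T j = -1 ∨ T j = 1) (hx : x ᵥ* M = T) (i : Fin (t + 1)) :
    2 * Fin.partialSum x i - ∑ k, x k = -1 ∨ 2 * Fin.partialSum x i - ∑ k, x k = 1 := by
  have hsucc : ∀ m : Fin t, 2 * Fin.partialSum x m.succ - ∑ k, x k = -1 ∨
      2 * Fin.partialSum x m.succ - ∑ k, x k = 1 := fun m => by
    have := congrFun hx (l m)
    rw [vecMul_apply_of_staircase hM] at this
    rcases hs m with h | h <;> rcases hT (l m) with h' | h' <;> rw [h, h'] at this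
      <;> [right; left; left; right] <;> linarith
  obtain ⟨n, rfl⟩ : ∃ n, t = n + 1 := ⟨t - 1, by omega⟩
  have hsum : ∑ k, x k = -1 ∨ ∑ k, x k = 1 := by
    have := hsucc (Fin.last n)
    rwa [Fin.succ_last, Fin.partialSum_last, two_mul, add_sub_cancel_right] at this
  induction i using Fin.cases with
  | zero => rw [Fin.partialSum_zero]; rcases hsum with h | h <;> [right; left] <;> linarith
  | succ m => exact hsucc m

lemma apply_eq_zero_or_sign_of_staircase (ht : 0 < t)
    (hM : ∀ k m, M k (l m) = if k ≤ m then s m else -s m) (hs : ∀ m, s m = -1 ∨ s m = 1)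
    {T x : Fin t → ℝ} (hT : ∀ j, T j = -1 ∨ T j = 1) (hx : x ᵥ* M = T) (j : Fin t) :
    x j = 0 ∨ x j = -1 ∨ x j = 1 := by
  have hx_j : x j = ((2 * Fin.partialSum x j.succ - ∑ k, x k) -
      (2 * Fin.partialSum x j.castSucc - ∑ k, x k)) / 2 := by
    rw [Fin.partialSum_succ]
    ring
  rw [hx_j]
  rcases two_mul_partialSum_sub_sum_sign ht hM hs hT hx j.succ with h | h <;>
    rcases two_mul_partialSum_sub_sum_sign ht hM hs hT hx j.castSucc with h' | h' <;>
    norm_num [h, h']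

lemma odd_card_support_of_staircase (ht : 0 < t)
    (hM : ∀ k m, M k (l m) = if k ≤ m then s m else -s m) (hs : ∀ m, s m = -1 ∨ s m = 1)
    {T x : Fin t → ℝ} (hT : ∀ j, T j = -1 ∨ T j = 1) (hx : x ᵥ* M = T) :
    Odd #{j | x j ≠ 0} := by
  refine odd_card_of_sum_eq_sign _ x (fun j hj => ?_) ?_
  · exact (apply_eq_zero_or_sign_of_staircase ht hM hs hT hx j).resolve_left (mem_filter.1 hj).2
  · have := two_mul_partialSum_sub_sum_sign ht hM hs hT hx (Fin.last t)
    rwa [Fin.partialSum_last, two_mul, add_sub_cancel_right, ← sum_filter_ne_zero] at this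

end Staircase

lemma LinearIndependent.linearIndepOn_smul_s7 {ι K V : Type*} [Field K] [AddCommGroup V] [Module K V]
    {v : ι → V} (hv : LinearIndependent K v) (a : ι → K) :
    LinearIndepOn K (fun i => a i • v i) {i | a i ≠ 0} :=
  (hv.comp Subtype.val Subtype.val_injective).units_smul fun i : {i | a i ≠ 0} =>
    Units.mk0 (a i) i.2

theorem stmt_7_general (t : ℕ) (ht : 0 < t)
    (R : Fin (t + 1) → Fin t → ℝ)
    (hsign : ∀ k j, R k j = -1 ∨ R k j = 1)
    (l : Fin t → Fin t) (hl : Function.Bijective l)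
    (hstep : ∀ (k : Fin t) (j : Fin t), R k.castSucc j ≠ R k.succ j ↔ j = l k)
    (T : Fin t → ℝ) (hT : ∀ j, T j = -1 ∨ T j = 1)
    (x : Fin t → ℝ)
    (hx : x = Matrix.vecMul T (Matrix.of fun i j : Fin t => R i.castSucc j)⁻¹)
    (Q : Finset (Fin t → ℝ))
    (hQ : Q = (Finset.univ.filter fun i : Fin t => x i ≠ 0).image
        fun i => x i • R i.castSucc) :
    (∃ m : ℕ, Q.card = 2 * m + 1) ∧
    LinearIndependent ℝ (fun q : {v // v ∈ Q} => (q : Fin t → ℝ)) := by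
  set M : Matrix (Fin t) (Fin t) ℝ := Matrix.of fun i j => R i.castSucc j
  have hM : ∀ k m, M k (l m) = if k ≤ m then R 0 (l m) else -R 0 (l m) := fun k m => by
    simp [M, walk_apply_eq_ite_of_flips hsign hl.injective hstep m k.castSucc]
  have hMunit : IsUnit M := isUnit_of_staircase hM fun m => by
    rcases hsign 0 (l m) with h | h <;> norm_num [h]
  have hxM : x ᵥ* M = T := by
    rw [hx, vecMul_vecMul, nonsing_inv_mul M ((isUnit_iff_isUnit_det M).1 hMunit), vecMul_one]
  have hindep : LinearIndepOn ℝ (fun i => x i • R i.castSucc) {i | x i ≠ 0} :=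
    (linearIndependent_rows_iff_isUnit.2 hMunit).linearIndepOn_smul_s7 x
  refine ⟨?_, ?_⟩
  · rw [hQ, card_image_of_injOn fun i hi j hj =>
      hindep.injOn (by simpa using hi) (by simpa using hj)]
    exact odd_card_support_of_staircase ht hM (fun m => hsign 0 (l m)) hT hxM
  · have hQ' : (Q : Set (Fin t → ℝ)) = (fun i => x i • R i.castSucc) '' {i | x i ≠ 0} := by
      simp [hQ]
    show LinearIndepOn ℝ id (Q : Set (Fin t → ℝ))
    rw [hQ']
    exact hindep.id_image

theorem stmt_7 (t : ℕ) (ht : 0 < t)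
    (B : Fin t → ℝ) (hB : ∀ j, B j = -1 ∨ B j = 1)
    (R : Fin (t + 1) → Fin t → ℝ)
    (hsign : ∀ k j, R k j = -1 ∨ R k j = 1)
    (hR0 : R 0 = B) (hRt : R (Fin.last t) = -B)
    (l : Fin t → Fin t) (hl : Function.Bijective l)
    (hstep : ∀ (k : Fin t) (j : Fin t), R k.castSucc j ≠ R k.succ j ↔ j = l k)
    (T : Fin t → ℝ) (hT : ∀ j, T j = -1 ∨ T j = 1)
    (x : Fin t → ℝ)
    (hx : x = Matrix.vecMul T (Matrix.of fun i j : Fin t => R i.castSucc j)⁻¹)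
    (V Q : Finset (Fin t → ℝ))
    (hV : V = (Finset.univ.image fun k : Fin t => R k.castSucc)
        ∪ (Finset.univ.image fun k : Fin t => -(R k.castSucc)))
    (hQ : Q = (Finset.univ.filter fun i : Fin t => x i ≠ 0).image
        fun i => x i • R i.castSucc) :
    (∃ m : ℕ, Q.card = 2 * m + 1) ∧
    LinearIndependent ℝ (fun q : {v // v ∈ Q} => (q : Fin t → ℝ)) :=
  stmt_7_general t ht R hsign l hl hstep T hT x hx Q hQ
end

section
/- Let V(R) be the vertex set of a symmetric cycle as above, and consider V(R) as a subposet of {-1,1}^t ordered by T' ⪯ T'' iff S(T⁺,T') ⊆ S(T⁺,T''), i.e., by inclusion of negative parts (the base point being the all-ones vector T⁺). Then the set min V(R) of minimal elements of this subposet equals Q(T⁺, R), and consequently T⁺ = Σ_{Q ∈ min V(R)} Q. -/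
/-!
Since `l` is a bijection, `R^k (l i) = ±R^0 (l i)` according as `k ≤ i` or not. At a vertex `±R^k`
look at the two coordinates `l k` and `l (k - 1)` flipped on its two edges of the cycle. If the
vertex is `-1` at one of them, the neighbour across that edge lies strictly below it; so the minimal
vertices are the local minima, those equal to `1` at both. For a local minimum `O` the product of
these two coordinates changes sign only at these two edges, so every other vertex is `-1` at one of
them. This makes `O` minimal, and summing the two coordinates over any `S ⊆ V(R)` with
`∑ S = T⁺` gives `2`, which forces `O ∈ S`. Finally, in each coordinate the sum of the local minima
telescopes to `R^0 (l p) ^ 2 = 1`.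
-/

open Finset Function

theorem Fin.val_finRotate_symm {t : ℕ} (k : Fin t) :
    ((finRotate t).symm k : ℕ) = if (k : ℕ) = 0 then t - 1 else k - 1 := by
  obtain ⟨n, rfl⟩ : ∃ n, t = n + 1 := ⟨t - 1, by have := k.pos; omega⟩
  rw [finRotate_symm_apply, Fin.coe_sub_one]
  by_cases hk : (k : ℕ) = 0
  · simp [show k = 0 from Fin.ext hk]
  · simp [hk, Fin.ext_iff]

theorem Fin.succ_finRotate_symm {t : ℕ} {k : Fin t} (hk : (k : ℕ) ≠ 0) :
    ((finRotate t).symm k).succ = k.castSucc :=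
  Fin.ext (by rw [Fin.val_succ, Fin.val_finRotate_symm, if_neg hk, Fin.val_castSucc]; omega)

theorem Fin.sum_mul_ite_le {M : Type*} [CommRing M] {n : ℕ} (f : Fin n → M) (p : Fin n) :
    ∑ k, f k * (if k ≤ p then 1 else -1) = 2 * ∑ k ∈ Iic p, f k - ∑ k, f k := by
  have h : ∀ k, f k * (if k ≤ p then 1 else -1) = 2 * (if k ≤ p then f k else 0) - f k := by
    intro k; split_ifs <;> ring
  rw [sum_congr rfl fun k _ => h k, sum_sub_distrib, ← mul_sum, ← sum_filter]
  congr 3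
  ext k; simp

theorem sum_pm_one_ite_smul {M : Type*} [AddCommGroup M] [Module ℝ M] {a b : ℝ}
    (ha : a = 1 ∨ a = -1) (hb : b = 1 ∨ b = -1) (v : M) :
    ∑ s ∈ ({1, -1} : Finset ℝ), (if s * a = 1 ∧ s * b = 1 then s • v else 0) =
      ((a + b) / 2) • v := by
  rw [sum_pair (by norm_num)]
  rcases ha with rfl | rfl <;> rcases hb with rfl | rfl <;> norm_num

section SignVectors

variable {ι : Type*}

theorem mem_of_sum_eq_one {V S : Finset (ι → ℝ)} {O : ι → ℝ} {a b : ι}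
    (hV : ∀ P ∈ V, ∀ i, P i = 1 ∨ P i = -1) (hsep : ∀ P ∈ V, P a = 1 → P b = 1 → P = O)
    (hS : S ⊆ V) (hsum : ∑ P ∈ S, P = fun _ => 1) : O ∈ S := by
  by_contra hO
  have hle : ∑ P ∈ S, (P a + P b) ≤ 0 := by
    refine sum_nonpos fun P hP => ?_
    rcases hV P (hS hP) a with ha | ha <;> rcases hV P (hS hP) b with hb | hb
    · exact absurd (hsep P (hS hP) ha hb ▸ hP) hO
    all_goals linarith
  have h2 : ∑ P ∈ S, (P a + P b) = 2 := by
    rw [sum_add_distrib, ← sum_apply a, ← sum_apply b, hsum]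
    norm_num
  linarith

variable [Fintype ι] [DecidableEq ι]

noncomputable def minimals (V : Finset (ι → ℝ)) : Finset (ι → ℝ) :=
  V.filter fun O => ∀ P ∈ V,
    (Finset.univ.filter fun e => P e = -1) ⊆ (Finset.univ.filter fun e => O e = -1) → P = O

theorem mem_minimals_of_apply_eq_one {V : Finset (ι → ℝ)} {O : ι → ℝ} {a b : ι}
    (hV : ∀ P ∈ V, ∀ i, P i = 1 ∨ P i = -1) (hO : O ∈ V) (ha : O a = 1) (hb : O b = 1)
    (hsep : ∀ P ∈ V, P a = 1 → P b = 1 → P = O) : O ∈ minimals V := by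
  refine mem_filter.2 ⟨hO, fun P hP hsub => hsep P hP ?_ ?_⟩
  all_goals
    refine (hV P hP _).resolve_right fun hneg => ?_
    have := hsub (mem_filter.2 ⟨mem_univ _, hneg⟩)
    norm_num [ha, hb] at this

theorem apply_eq_one_of_mem_minimals {V : Finset (ι → ℝ)} {O P : ι → ℝ} {c : ι}
    (hO : O ∈ minimals V) (hP : P ∈ V) (hc : O c = 1 ∨ O c = -1) (hPc : P c = -O c)
    (hoff : ∀ e ≠ c, P e = O e) : O c = 1 := by
  refine hc.resolve_right fun hneg => ?_
  have hsub : (univ.filter fun e => P e = -1) ⊆ (univ.filter fun e => O e = -1) := by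
    intro e he
    simp only [mem_filter, mem_univ, true_and] at he ⊢
    by_cases hec : e = c
    · exact hec ▸ hneg
    · rwa [← hoff e hec]
  have := congrFun ((mem_filter.1 hO).2 P hP hsub) c
  norm_num [hPc, hneg] at this

end SignVectors

/-- `R k` (`k ≤ t`) is the vertex `R^k` of the cycle, whose second half `R^(k+t) = -R^k` is left
implicit, and `l k` is the coordinate flipped between `R^k` and `R^(k+1)`. -/
structure IsSymmetricCycle {t : ℕ} (R : Fin (t + 1) → Fin t → ℝ) (l : Fin t → Fin t) : Prop where
  sign : ∀ k j, R k j = -1 ∨ R k j = 1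
  last : R (Fin.last t) = -R 0
  bijective : Bijective l
  step : ∀ k j, R k.castSucc j ≠ R k.succ j ↔ j = l k

noncomputable def vertices {t : ℕ} (R : Fin (t + 1) → Fin t → ℝ) : Finset (Fin t → ℝ) :=
  (univ.image fun k : Fin t => R k.castSucc) ∪ (univ.image fun k : Fin t => -(R k.castSucc))

theorem mem_vertices {t : ℕ} {R : Fin (t + 1) → Fin t → ℝ} {P : Fin t → ℝ} :
    P ∈ vertices R ↔ ∃ k : Fin t, ∃ s : ℝ, (s = 1 ∨ s = -1) ∧ s • R k.castSucc = P := by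
  simp [vertices, or_and_right, exists_or]

theorem smul_mem_vertices {t : ℕ} (R : Fin (t + 1) → Fin t → ℝ) (k : Fin t) {s : ℝ}
    (hs : s = 1 ∨ s = -1) : s • R k.castSucc ∈ vertices R :=
  mem_vertices.2 ⟨k, s, hs, rfl⟩

namespace IsSymmetricCycle

variable {t : ℕ} {R : Fin (t + 1) → Fin t → ℝ} {l : Fin t → Fin t}

theorem apply_of_mem_vertices (hR : IsSymmetricCycle R l) {P : Fin t → ℝ}
    (hP : P ∈ vertices R) (j : Fin t) : P j = 1 ∨ P j = -1 := by
  obtain ⟨k, s, hs, rfl⟩ := mem_vertices.1 hP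
  rcases hs with rfl | rfl <;> rcases hR.sign k.castSucc j with h | h <;> simp [h]

theorem apply_succ_self (hR : IsSymmetricCycle R l) (k : Fin t) :
    R k.succ (l k) = -R k.castSucc (l k) := by
  have hne := (hR.step k (l k)).2 rfl
  rcases hR.sign k.castSucc (l k) with h | h <;> rcases hR.sign k.succ (l k) with h' | h' <;>
    simp_all

theorem apply_succ_of_ne (hR : IsSymmetricCycle R l) {k j : Fin t} (h : j ≠ l k) :
    R k.succ j = R k.castSucc j :=
  (of_not_not fun hne => h ((hR.step k j).1 hne)).symm

theorem apply_eq_ite (hR : IsSymmetricCycle R l) (k : Fin (t + 1)) (i : Fin t) :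
    R k (l i) = (if (k : ℕ) ≤ i then 1 else -1) * R 0 (l i) := by
  induction k using Fin.induction with
  | zero => simp
  | succ k ih =>
    by_cases hki : k = i
    · subst hki
      rw [hR.apply_succ_self, ih]
      simp
    · rw [hR.apply_succ_of_ne (hR.bijective.1.ne (Ne.symm hki)), ih]
      have hle : (k : ℕ) + 1 ≤ i ↔ (k : ℕ) ≤ i := by have := Fin.val_ne_of_ne hki; omega
      simp [hle]

theorem apply_castSucc_eq_ite (hR : IsSymmetricCycle R l) (k i : Fin t) :
    R k.castSucc (l i) = (if k ≤ i then 1 else -1) * R 0 (l i) := by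
  rw [hR.apply_eq_ite]
  simp only [Fin.val_castSucc, Fin.le_iff_val_le_val]

theorem smul_succ_mem_vertices (hR : IsSymmetricCycle R l) (k : Fin t) {s : ℝ}
    (hs : s = 1 ∨ s = -1) : s • R k.succ ∈ vertices R := by
  by_cases hk : (k : ℕ) + 1 < t
  · rw [show k.succ = (⟨k + 1, hk⟩ : Fin t).castSucc from rfl]
    exact smul_mem_vertices R _ hs
  · rw [show k.succ = Fin.last t from Fin.ext (by simp; omega), hR.last, smul_neg, ← neg_smul]
    exact smul_mem_vertices R ⟨0, k.pos⟩ (by rcases hs with rfl | rfl <;> norm_num)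

/- `(finRotate t).symm k` is `k - 1 (mod t)`: the cycle enters `±R^k` through the edge that flips
`l ((finRotate t).symm k)`, and leaves it through the edge that flips `l k`. -/
theorem exists_smul_eq_smul_succ_prev (hR : IsSymmetricCycle R l) (k : Fin t) {s : ℝ}
    (hs : s = 1 ∨ s = -1) : ∃ s' : ℝ, (s' = 1 ∨ s' = -1) ∧
      s • R k.castSucc = s' • R ((finRotate t).symm k).succ := by
  by_cases hk : (k : ℕ) = 0
  · refine ⟨-s, by rcases hs with rfl | rfl <;> norm_num, ?_⟩
    rw [show k.castSucc = 0 from Fin.ext hk,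
      show ((finRotate t).symm k).succ = Fin.last t from
        Fin.ext (by rw [Fin.val_succ, Fin.val_finRotate_symm, if_pos hk, Fin.val_last]; omega),
      hR.last, smul_neg, neg_smul, neg_neg]
  · exact ⟨s, hs, by rw [Fin.succ_finRotate_symm hk]⟩

theorem apply_mul_apply_prev_eq_iff (hR : IsSymmetricCycle R l) {k k' : Fin t} :
    R k'.castSucc (l k) * R k'.castSucc (l ((finRotate t).symm k)) =
      R k.castSucc (l k) * R k.castSucc (l ((finRotate t).symm k)) ↔ k' = k := by
  have hne : R 0 (l k) * R 0 (l ((finRotate t).symm k)) ≠ 0 := by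
    rcases hR.sign 0 (l k) with h | h <;>
      rcases hR.sign 0 (l ((finRotate t).symm k)) with h' | h' <;> rw [h, h'] <;> norm_num
  simp only [hR.apply_castSucc_eq_ite, Fin.le_iff_val_le_val]
  rw [mul_mul_mul_comm, mul_mul_mul_comm _ (R 0 (l k)), mul_left_inj' hne, Fin.val_finRotate_symm,
    Fin.ext_iff]
  split_ifs <;> norm_num <;> omega

theorem eq_of_apply_eq_apply (hR : IsSymmetricCycle R l) {k k' : Fin t} {s s' : ℝ}
    (hs : s = 1 ∨ s = -1) (hs' : s' = 1 ∨ s' = -1)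
    (ha : (s' • R k'.castSucc) (l k) = (s • R k.castSucc) (l k))
    (hb : (s' • R k'.castSucc) (l ((finRotate t).symm k)) =
      (s • R k.castSucc) (l ((finRotate t).symm k))) : k' = k ∧ s' = s := by
  simp only [Pi.smul_apply, smul_eq_mul] at ha hb
  have hss : s * s = 1 := by rcases hs with rfl | rfl <;> norm_num
  have hss' : s' * s' = 1 := by rcases hs' with rfl | rfl <;> norm_num
  set a := l k
  set b := l ((finRotate t).symm k)
  obtain rfl : k' = k := hR.apply_mul_apply_prev_eq_iff.1 <| by
    linear_combination (s' * R k'.castSucc a) * hb + (s * R k.castSucc b) * ha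
      - R k'.castSucc a * R k'.castSucc b * hss' + R k.castSucc a * R k.castSucc b * hss
  refine ⟨rfl, mul_right_cancel₀ ?_ ha⟩
  rcases hR.sign k'.castSucc a with h | h <;> norm_num [h]

theorem eq_of_apply_eq_one (hR : IsSymmetricCycle R l) {k : Fin t} {s : ℝ} (hs : s = 1 ∨ s = -1)
    (ha : (s • R k.castSucc) (l k) = 1) (hb : (s • R k.castSucc) (l ((finRotate t).symm k)) = 1)
    {P : Fin t → ℝ} (hP : P ∈ vertices R) (hPa : P (l k) = 1)
    (hPb : P (l ((finRotate t).symm k)) = 1) : P = s • R k.castSucc := by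
  obtain ⟨k', s', hs', rfl⟩ := mem_vertices.1 hP
  obtain ⟨rfl, rfl⟩ := hR.eq_of_apply_eq_apply hs hs' (hPa.trans ha.symm) (hPb.trans hb.symm)
  rfl

theorem smul_mem_minimals_iff (hR : IsSymmetricCycle R l) (k : Fin t) {s : ℝ}
    (hs : s = 1 ∨ s = -1) : s • R k.castSucc ∈ minimals (vertices R) ↔
      (s • R k.castSucc) (l k) = 1 ∧ (s • R k.castSucc) (l ((finRotate t).symm k)) = 1 := by
  have hV : ∀ P ∈ vertices R, ∀ j, P j = 1 ∨ P j = -1 := fun P hP => hR.apply_of_mem_vertices hP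
  refine ⟨fun hO => ⟨?_, ?_⟩, fun ⟨ha, hb⟩ =>
    mem_minimals_of_apply_eq_one hV (smul_mem_vertices R k hs) ha hb
      fun P hP => hR.eq_of_apply_eq_one hs ha hb hP⟩
  · refine apply_eq_one_of_mem_minimals hO (hR.smul_succ_mem_vertices k hs)
      (hV _ (smul_mem_vertices R k hs) _) ?_ fun e he => ?_
    · simp only [Pi.smul_apply, smul_eq_mul, hR.apply_succ_self, mul_neg]
    · simp only [Pi.smul_apply, hR.apply_succ_of_ne he]
  · obtain ⟨s', hs', hO'⟩ := hR.exists_smul_eq_smul_succ_prev k hs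
    rw [hO'] at hO ⊢
    refine apply_eq_one_of_mem_minimals hO (smul_mem_vertices R ((finRotate t).symm k) hs')
      (hV _ (mem_filter.1 hO).1 _) ?_ fun e he => ?_
    · simp only [Pi.smul_apply, smul_eq_mul, hR.apply_succ_self, mul_neg, neg_neg]
    · simp only [Pi.smul_apply, hR.apply_succ_of_ne he]

theorem sum_mul_apply_eq_one (hR : IsSymmetricCycle R l) (p : Fin t) :
    ∑ k : Fin t, (R k.castSucc (l k) + R k.castSucc (l ((finRotate t).symm k))) / 2 *
      R k.castSucc (l p) = 1 := by
  obtain ⟨n, rfl⟩ : ∃ n, t = n + 1 := ⟨t - 1, by have := p.pos; omega⟩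
  have hprev : (finRotate (n + 1)).symm 0 = Fin.last n :=
    Fin.ext (by rw [Fin.val_finRotate_symm]; simp)
  -- `g k.succ` and `-g k.castSucc` are the values of `R^k` at the coordinates flipped leaving and
  -- entering it, so the coefficients `(g k.succ - g k.castSucc) / 2` telescope.
  set g : Fin (n + 2) → ℝ := Fin.cons (-R 0 (l (Fin.last n))) fun k => R k.castSucc (l k)
  have hg : ∀ k : Fin (n + 1), R k.castSucc (l k) + R k.castSucc (l ((finRotate _).symm k)) =
      g k.succ - g k.castSucc := by
    intro k
    by_cases hk : (k : ℕ) = 0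
    · obtain rfl : k = 0 := Fin.ext hk
      simp [g, hprev]
    · have hsucc := Fin.succ_finRotate_symm hk
      have hin : R k.castSucc (l ((finRotate _).symm k)) =
          -R ((finRotate _).symm k).castSucc (l ((finRotate _).symm k)) := by
        rw [← hsucc, hR.apply_succ_self]
      rw [hin, show g k.castSucc = g ((finRotate _).symm k).succ by rw [hsucc]]
      simp only [g, Fin.cons_succ]
      ring
  have hIic : ∀ a : Fin (n + 1), ∑ k ∈ Iic a, (g k.succ - g k.castSucc) =
      R a.castSucc (l a) + R 0 (l (Fin.last n)) := by
    intro a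
    rw [Fin.sum_Iic_sub]
    simp [g]
  have hd : R 0 (l p) * R 0 (l p) = 1 := by rcases hR.sign 0 (l p) with h | h <;> norm_num [h]
  calc _ = (∑ k, (g k.succ - g k.castSucc) * (if k ≤ p then 1 else -1)) * (R 0 (l p) / 2) := by
        rw [sum_mul]
        refine sum_congr rfl fun k _ => ?_
        rw [hg, hR.apply_castSucc_eq_ite]
        ring
    _ = 1 := by
        rw [Fin.sum_mul_ite_le, ← Iic_top, Fin.top_eq_last, hIic, hIic,
          hR.apply_castSucc_eq_ite, hR.apply_castSucc_eq_ite, if_pos le_rfl, if_pos le_rfl]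
        linear_combination hd

theorem minimals_vertices_eq_image (hR : IsSymmetricCycle R l) :
    minimals (vertices R) = ((univ ×ˢ {1, -1}).filter fun ks : Fin t × ℝ =>
      ks.2 * R ks.1.castSucc (l ks.1) = 1 ∧
        ks.2 * R ks.1.castSucc (l ((finRotate t).symm ks.1)) = 1).image
      fun ks => ks.2 • R ks.1.castSucc := by
  ext O
  simp only [mem_image, mem_filter, mem_product, mem_univ, true_and, mem_insert, mem_singleton,
    Prod.exists]
  constructor
  · intro hO
    obtain ⟨k, s, hs, rfl⟩ := mem_vertices.1 (mem_filter.1 hO).1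
    exact ⟨k, s, ⟨hs, (hR.smul_mem_minimals_iff k hs).1 hO⟩, rfl⟩
  · rintro ⟨k, s, ⟨hs, hloc⟩, rfl⟩
    exact (hR.smul_mem_minimals_iff k hs).2 hloc

theorem sum_minimals_vertices (hR : IsSymmetricCycle R l) :
    ∑ O ∈ minimals (vertices R), O = fun _ => 1 := by
  rw [hR.minimals_vertices_eq_image, sum_image, sum_filter, sum_product]
  · funext j
    obtain ⟨p, rfl⟩ := hR.bijective.2 j
    rw [Finset.sum_apply]
    refine (sum_congr rfl fun k _ => ?_).trans (hR.sum_mul_apply_eq_one p)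
    dsimp only
    rw [sum_pm_one_ite_smul (hR.sign _ _).symm (hR.sign _ _).symm, Pi.smul_apply, smul_eq_mul]
  · rintro ⟨k, s⟩ hks ⟨k', s'⟩ hks' h
    simp only [coe_filter, mem_product, mem_univ, true_and, mem_insert, mem_singleton,
      Set.mem_ofPred_eq] at hks hks'
    obtain ⟨rfl, rfl⟩ := hR.eq_of_apply_eq_apply hks'.1 hks.1 (congrFun h (l k')) (congrFun h _)
    rfl

theorem minimals_subset_of_sum_eq_one (hR : IsSymmetricCycle R l) {S : Finset (Fin t → ℝ)}
    (hS : S ⊆ vertices R) (hsum : ∑ P ∈ S, P = fun _ => 1) : minimals (vertices R) ⊆ S := by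
  intro O hO
  obtain ⟨k, s, hs, rfl⟩ := mem_vertices.1 (mem_filter.1 hO).1
  obtain ⟨ha, hb⟩ := (hR.smul_mem_minimals_iff k hs).1 hO
  exact mem_of_sum_eq_one (fun P hP => hR.apply_of_mem_vertices hP)
    (fun P hP => hR.eq_of_apply_eq_one hs ha hb hP) hS hsum

end IsSymmetricCycle

theorem stmt_8_general (t : ℕ)
    (R : Fin (t + 1) → Fin t → ℝ)
    (hsign : ∀ k j, R k j = -1 ∨ R k j = 1)
    (hRt : R (Fin.last t) = -(R 0))
    (l : Fin t → Fin t) (hl : Function.Bijective l)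
    (hstep : ∀ (k : Fin t) (j : Fin t), R k.castSucc j ≠ R k.succ j ↔ j = l k)
    (V : Finset (Fin t → ℝ))
    (hV : V = (Finset.univ.image fun k : Fin t => R k.castSucc)
        ∪ (Finset.univ.image fun k : Fin t => -(R k.castSucc)))
    (minV : Finset (Fin t → ℝ))
    (hmin : minV = V.filter fun O => ∀ P ∈ V,
      (Finset.univ.filter fun e => P e = -1) ⊆ (Finset.univ.filter fun e => O e = -1)
        → P = O) :
    (∑ q ∈ minV, q) = (fun _ => (1 : ℝ)) ∧
    ∀ S : Finset (Fin t → ℝ), S ⊆ V → (∑ q ∈ S, q) = (fun _ => (1 : ℝ)) → minV ⊆ S := by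
  have hR : IsSymmetricCycle R l := ⟨hsign, hRt, hl, hstep⟩
  obtain rfl : V = vertices R := hV
  obtain rfl : minV = minimals (vertices R) := hmin
  exact ⟨hR.sum_minimals_vertices, fun S hS hsum => hR.minimals_subset_of_sum_eq_one hS hsum⟩

theorem stmt_8 (t : ℕ) (ht : 0 < t)
    (R : Fin (t + 1) → Fin t → ℝ)
    (hsign : ∀ k j, R k j = -1 ∨ R k j = 1)
    (hRt : R (Fin.last t) = -(R 0))
    (l : Fin t → Fin t) (hl : Function.Bijective l)
    (hstep : ∀ (k : Fin t) (j : Fin t), R k.castSucc j ≠ R k.succ j ↔ j = l k)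
    (V : Finset (Fin t → ℝ))
    (hV : V = (Finset.univ.image fun k : Fin t => R k.castSucc)
        ∪ (Finset.univ.image fun k : Fin t => -(R k.castSucc)))
    (minV : Finset (Fin t → ℝ))
    (hmin : minV = V.filter fun O => ∀ P ∈ V,
      (Finset.univ.filter fun e => P e = -1) ⊆ (Finset.univ.filter fun e => O e = -1)
        → P = O) :
    (∑ q ∈ minV, q) = (fun _ => (1 : ℝ)) ∧
    ∀ S : Finset (Fin t → ℝ), S ⊆ V → (∑ q ∈ S, q) = (fun _ => (1 : ℝ)) → minV ⊆ S :=
  stmt_8_general t R hsign hRt l hl hstep V hV minV hmin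
end

section
/- With V(R) as above and base point T⁺ = (1,…,1), a vertex O ∈ V(R) is a minimal element of the subposet (V(R), ⪯_{T⁺}) if and only if for its two neighbors O', O'' on the symmetric cycle one has |O'⁻| = |O''⁻| = |O⁻| + 1, i.e., both neighbors have negative parts of cardinality one more than that of O. -/
/-!
Consecutive vertices of the cycle differ in exactly one coordinate, so the negative part of a
neighbour of `O` is that of `O` with the flipped coordinate added or removed; if it is removed,
the neighbour lies strictly below `O`. Conversely, let both neighbours gain: `a` is flipped between
`O'` and `O`, `b` between `O` and `O''`, both positive at `O`. As the flips form a permutation, a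
coordinate flipped at step `m` is not flipped again before step `m + t`; hence `b` is negative at
the `t` vertices following `O` and, by `R^{k+t} = -R^k`, `a` is negative at the `t` vertices
preceding `O`. These are all the other vertices of the cycle, so none of them lies below `O`.
-/

open Finset Function

theorem Function.Periodic.exists_eq_add {α : Type*} {f : ℤ → α} {c : ℤ} (h : Periodic f c)
    (hc : 0 < c) (n k : ℤ) : ∃ r, 0 ≤ r ∧ r < c ∧ f n = f (k + r) := by
  refine ⟨(n - k) % c, Int.emod_nonneg _ hc.ne', Int.emod_lt_of_pos _ hc, ?_⟩
  rw [Int.emod_def, ← add_sub_assoc, add_sub_cancel, mul_comm]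
  exact (h.sub_int_mul_eq _).symm

noncomputable def negSet {ι : Type*} [Fintype ι] (X : ι → ℝ) : Finset ι :=
  univ.filter fun e => X e = -1

section NegSet

variable {ι : Type*} [Fintype ι] {X Y : ι → ℝ} {j : ι}

@[simp]
theorem mem_negSet {e : ι} : e ∈ negSet X ↔ X e = -1 := by
  simp [negSet]

theorem negSet_subset_of_flip (hflip : ∀ i, X i ≠ Y i ↔ i = j) (hj : X j = -1) :
    negSet Y ⊆ negSet X := by
  intro i hi
  rw [mem_negSet] at hi ⊢
  by_cases hij : i = j
  · exact hij ▸ hj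
  · exact (of_not_not (mt (hflip i).1 hij)).trans hi

theorem negSet_eq_insert_of_flip [DecidableEq ι] (hflip : ∀ i, X i ≠ Y i ↔ i = j)
    (hj : Y j = -1) : negSet Y = insert j (negSet X) := by
  ext i
  by_cases hij : i = j
  · subst hij
    simp [hj]
  · simp [hij, of_not_not (mt (hflip i).1 hij)]

theorem card_negSet_eq_add_one_iff (hX : ∀ i, X i = -1 ∨ X i = 1) (hY : ∀ i, Y i = -1 ∨ Y i = 1)
    (hflip : ∀ i, X i ≠ Y i ↔ i = j) : #(negSet Y) = #(negSet X) + 1 ↔ X j = 1 := by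
  classical
  have hne : X j ≠ Y j := (hflip j).2 rfl
  rcases hX j with hXj | hXj
  · have := card_le_card (negSet_subset_of_flip hflip hXj)
    exact iff_of_false (by omega) (by norm_num [hXj])
  · have hYj : Y j = -1 := (hY j).resolve_right (hXj ▸ hne.symm)
    rw [negSet_eq_insert_of_flip hflip hYj, card_insert_of_notMem (by norm_num [hXj])]
    simp [hXj]

theorem card_negSet_eq_add_one_of_minimal (hX : ∀ i, X i = -1 ∨ X i = 1)
    (hY : ∀ i, Y i = -1 ∨ Y i = 1) (hflip : ∀ i, X i ≠ Y i ↔ i = j)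
    (hmin : negSet Y ⊆ negSet X → Y = X) : #(negSet Y) = #(negSet X) + 1 := by
  refine (card_negSet_eq_add_one_iff hX hY hflip).2 ((hX j).resolve_left fun hXj => ?_)
  exact (hflip j).2 rfl (congrFun (hmin (negSet_subset_of_flip hflip hXj)) j).symm

end NegSet

structure IsSymmetricCycle_s10 {ι : Type*} {t : ℕ} (D : ℤ → ι → ℝ) (l : Fin t → ι) : Prop where
  sign : ∀ k j, D k j = -1 ∨ D k j = 1
  antiperiodic : Antiperiodic D t
  step : ∀ (k : Fin t) j, D (k : ℕ) j ≠ D ((k : ℕ) + 1) j ↔ j = l k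
  injective : Injective l

namespace IsSymmetricCycle_s10

variable {ι : Type*} {t : ℕ} {D : ℤ → ι → ℝ} {l : Fin t → ι}

theorem flip_iff_flip_emod (hD : IsSymmetricCycle_s10 D l) (m : ℤ) (j : ι) :
    D m j ≠ D (m + 1) j ↔ D (m % t) j ≠ D (m % t + 1) j := by
  have hF : Periodic (fun x => D x j ≠ D (x + 1) j) t := by
    intro x
    dsimp only
    rw [add_right_comm, hD.antiperiodic, hD.antiperiodic]
    simp only [Pi.neg_apply, ne_eq, neg_inj]
  rw [Int.emod_def, mul_comm]
  exact (Iff.of_eq (hF.sub_int_mul_eq _)).symm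

theorem exists_flip (hD : IsSymmetricCycle_s10 D l) (ht : 0 < t) (m : ℤ) :
    ∃ k : Fin t, ((k : ℕ) : ℤ) = m % t ∧ ∀ j, D m j ≠ D (m + 1) j ↔ j = l k := by
  have h0 := Int.emod_nonneg m (by omega : (t : ℤ) ≠ 0)
  have hlt := Int.emod_lt_of_pos m (by omega : (0 : ℤ) < t)
  obtain ⟨k, hk⟩ : ∃ k : Fin t, ((k : ℕ) : ℤ) = m % t :=
    ⟨⟨(m % t).toNat, by omega⟩, by simp [h0]⟩
  exact ⟨k, hk, fun j => by rw [hD.flip_iff_flip_emod, ← hk]; exact hD.step k j⟩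

theorem modEq_of_flip (hD : IsSymmetricCycle_s10 D l) (ht : 0 < t) {m m' : ℤ} {j : ι}
    (hm : D m j ≠ D (m + 1) j) (hm' : D m' j ≠ D (m' + 1) j) : m ≡ m' [ZMOD t] := by
  obtain ⟨k, hk, hflip⟩ := hD.exists_flip ht m
  obtain ⟨k', hk', hflip'⟩ := hD.exists_flip ht m'
  have : k = k' := hD.injective (((hflip j).1 hm).symm.trans ((hflip' j).1 hm'))
  rw [Int.ModEq, ← hk, ← hk', this]

theorem apply_add_eq_of_flip (hD : IsSymmetricCycle_s10 D l) (ht : 0 < t) {m : ℤ} {j : ι}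
    (hm : D m j ≠ D (m + 1) j) {d : ℕ} (hd : d < t) : D (m + 1 + d) j = D (m + 1) j := by
  induction d with
  | zero => simp
  | succ d ih =>
    rw [← ih (by omega), Nat.cast_succ, ← add_assoc]
    by_contra h
    have hdvd : (t : ℤ) ∣ ((d + 1 : ℕ) : ℤ) := by
      convert (hD.modEq_of_flip ht hm (Ne.symm h)).dvd using 1
      push_cast
      ring
    have := Nat.le_of_dvd (Nat.succ_pos d) (Int.natCast_dvd_natCast.1 hdvd)
    omega

theorem apply_mem_image_range [DecidableEq (ι → ℝ)] (hD : IsSymmetricCycle_s10 D l) (ht : 0 < t)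
    (m : ℤ) : D m ∈ (range (2 * t)).image fun k : ℕ => D k := by
  obtain ⟨r, hr0, hr, hm⟩ :=
    hD.antiperiodic.periodic_two_mul.exists_eq_add (by positivity) m 0
  lift r to ℕ using hr0
  refine mem_image.2 ⟨r, mem_range.2 (by omega), ?_⟩
  rw [hm, zero_add]

theorem eq_of_negSet_subset [Fintype ι] (hD : IsSymmetricCycle_s10 D l) (ht : 0 < t) {k : ℤ}
    {a b : ι}
    (ha : D (k - 1) a ≠ D k a) (hb : D k b ≠ D (k + 1) b) (hak : D k a = 1) (hbk : D k b = 1)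
    (n : ℤ) (hsub : negSet (D n) ⊆ negSet (D k)) : D n = D k := by
  obtain ⟨r, hr0, hr, hn⟩ :=
    hD.antiperiodic.periodic_two_mul.exists_eq_add (by positivity) n k
  rw [hn] at hsub ⊢
  rcases hr0.eq_or_lt with rfl | hr0
  · simp
  suffices ∃ j, D k j = 1 ∧ D (k + r) j = -1 by
    obtain ⟨j, hkj, hrj⟩ := this
    have := hsub (mem_negSet.2 hrj)
    rw [mem_negSet, hkj] at this
    norm_num at this
  by_cases hrt : r ≤ t
  · obtain ⟨d, rfl⟩ : ∃ d : ℕ, r = d + 1 := ⟨(r - 1).toNat, by omega⟩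
    refine ⟨b, hbk, (hD.sign _ b).resolve_right fun h => hb ?_⟩
    rw [hbk, ← hD.apply_add_eq_of_flip ht hb (by omega : d < t), ← h, add_right_comm, add_assoc]
  · obtain ⟨d, rfl⟩ : ∃ d : ℕ, r = d + t := ⟨(r - t).toNat, by omega⟩
    have hrun := hD.apply_add_eq_of_flip ht (m := k - 1) (by rwa [sub_add_cancel])
      (by omega : d < t)
    rw [sub_add_cancel] at hrun
    refine ⟨a, hak, ?_⟩
    rw [← add_assoc, hD.antiperiodic, Pi.neg_apply, hrun, hak]

end IsSymmetricCycle_s10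

theorem stmt_10_general (t : ℕ) (ht : 2 ≤ t)
    (D : ℤ → Fin t → ℝ)
    (hsign : ∀ k j, D k j = -1 ∨ D k j = 1)
    (hant : ∀ k : ℤ, D (k + t) = -(D k))
    (l : Fin t → Fin t) (hl : Function.Bijective l)
    (hstep : ∀ (k : Fin t) (j : Fin t), D (k : ℕ) j ≠ D ((k : ℕ) + 1) j ↔ j = l k)
    (V : Finset (Fin t → ℝ))
    (hV : V = (Finset.range (2 * t)).image fun k : ℕ => D k) :
    ∀ k : ℤ,
      ((∀ P ∈ V,
          (Finset.univ.filter fun e => P e = -1)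
              ⊆ (Finset.univ.filter fun e => D k e = -1) → P = D k) ↔
        ((Finset.univ.filter fun e => D (k - 1) e = -1).card
            = (Finset.univ.filter fun e => D k e = -1).card + 1 ∧
         (Finset.univ.filter fun e => D (k + 1) e = -1).card
            = (Finset.univ.filter fun e => D k e = -1).card + 1)) := by
  intro k
  change (∀ P ∈ V, negSet P ⊆ negSet (D k) → P = D k) ↔
    #(negSet (D (k - 1))) = #(negSet (D k)) + 1 ∧ #(negSet (D (k + 1))) = #(negSet (D k)) + 1
  have hD : IsSymmetricCycle_s10 D l := ⟨hsign, hant, hstep, hl.1⟩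
  have ht0 : 0 < t := by omega
  obtain ⟨_, _, hflipA⟩ := hD.exists_flip ht0 (k - 1)
  obtain ⟨_, _, hflipB⟩ := hD.exists_flip ht0 k
  rw [sub_add_cancel] at hflipA
  have hflipA' : ∀ j, D k j ≠ D (k - 1) j ↔ j = _ := fun j => ne_comm.trans (hflipA j)
  subst hV
  constructor
  · intro hmin
    exact ⟨card_negSet_eq_add_one_of_minimal (hsign k) (hsign _) hflipA'
        (hmin _ (hD.apply_mem_image_range ht0 _)),
      card_negSet_eq_add_one_of_minimal (hsign k) (hsign _) hflipB
        (hmin _ (hD.apply_mem_image_range ht0 _))⟩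
  · rintro ⟨hA, hB⟩ P hP hsub
    obtain ⟨n, -, rfl⟩ := mem_image.1 hP
    exact hD.eq_of_negSet_subset ht0 ((hflipA _).2 rfl) ((hflipB _).2 rfl)
      ((card_negSet_eq_add_one_iff (hsign k) (hsign _) hflipA').1 hA)
      ((card_negSet_eq_add_one_iff (hsign k) (hsign _) hflipB).1 hB) n hsub

theorem stmt_10 (t : ℕ) (ht : 2 ≤ t)
    (D : ℤ → Fin t → ℝ)
    (hsign : ∀ k j, D k j = -1 ∨ D k j = 1)
    (hper : ∀ k : ℤ, D (k + 2 * t) = D k)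
    (hant : ∀ k : ℤ, D (k + t) = -(D k))
    (l : Fin t → Fin t) (hl : Function.Bijective l)
    (hstep : ∀ (k : Fin t) (j : Fin t), D (k : ℕ) j ≠ D ((k : ℕ) + 1) j ↔ j = l k)
    (V : Finset (Fin t → ℝ))
    (hV : V = (Finset.range (2 * t)).image fun k : ℕ => D k) :
    ∀ k : ℤ,
      ((∀ P ∈ V,
          (Finset.univ.filter fun e => P e = -1)
              ⊆ (Finset.univ.filter fun e => D k e = -1) → P = D k) ↔
        ((Finset.univ.filter fun e => D (k - 1) e = -1).card
            = (Finset.univ.filter fun e => D k e = -1).card + 1 ∧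
         (Finset.univ.filter fun e => D (k + 1) e = -1).card
            = (Finset.univ.filter fun e => D k e = -1).card + 1)) :=
  stmt_10_general t ht D hsign hant l hl hstep V hV
end

section
/- For any T ∈ {-1,1}^t and any symmetric cycle vertex set V(R) as above, the decomposition set satisfies Q(T,R) = {flip_{T⁻}(Q) : Q ∈ max⁺(flip_{T⁻}(V(R)))}, where flip_A negates coordinates in A; in particular T = Σ over this set. -/
/-!
Extend `R` antiperiodically (`R^{k+t} = -R^k`) to a cycle indexed by `ℕ`. Each coordinate `j` is
flipped at two antipodal steps, so it is `+1` on one half-period and `-1` on the other. A vertex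
`R^{k+1}` has an inclusion-maximal positive part exactly when step `k` turns a coordinate
positive and step `k + 1` turns one negative (a *peak*): otherwise a neighbour has a strictly
larger positive part, while at a peak the two coordinates involved are positive simultaneously
only at `R^{k+1}`. Summing coordinate `j` over the peaks, the contributions of the two
half-periods telescope to `1`, so the peaks sum to the all-ones vector; applying this to the
cycle `flip_{T⁻}(R)` gives `∑ Q = T`.

For minimality, `R^0, …, R^{t-1}` is a basis (consecutive differences are multiples of standard
basis vectors, and `R^t = -R^0`), so a subset `S ⊆ V = ±{R^k}` has coordinate
`[R^k ∈ S] - [-R^k ∈ S]` along `R^k`. The set `Q` contains no antipodal pair, so equal sums force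
`Q ⊆ S`.
-/

open Finset

theorem Function.Periodic.sum_range_add {M : Type*} [AddCommMonoid M] {f : ℕ → M} {n : ℕ}
    (hf : Function.Periodic f n) (b : ℕ) : ∑ k ∈ range n, f (b + k) = ∑ k ∈ range n, f k :=
  calc ∑ k ∈ range n, f (b + k) = ∑ k ∈ Ico b (b + n), f k := by
        rw [sum_Ico_eq_sum_range, Nat.add_sub_cancel_left]
    _ = (((Multiset.Ico b (b + n)).map (· % n)).map f).sum := by
        simp only [Multiset.map_map, Function.comp_def, hf.map_mod_nat]; rfl
    _ = ∑ k ∈ range n, f k := by rw [Nat.multiset_Ico_map_mod]; rfl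

section SignedSubsets

variable {ι K M : Type*} [Fintype ι] [Ring K] [CharZero K] [AddCommGroup M] [Module K M]
  {v : ι → M}

theorem LinearIndependent.ne_neg (hv : LinearIndependent K v) (i j : ι) : v i ≠ -v j := by
  classical
  intro h
  have hsum : ∑ k, (Pi.single i (1 : K) + Pi.single j (1 : K) : ι → K) k • v k = 0 := by
    simp [add_smul, sum_add_distrib, Pi.single_apply, h]
  have := Fintype.linearIndependent_iff.mp hv _ hsum i
  by_cases hij : i = j <;> norm_num [hij] at this

theorem LinearIndependent.injective_sumElim_neg (hv : LinearIndependent K v) :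
    Function.Injective (Sum.elim v (-v)) := by
  rintro (i | i) (j | j) h
  · simpa using hv.injective h
  · exact absurd h (hv.ne_neg i j)
  · exact absurd h.symm (hv.ne_neg j i)
  · simpa using hv.injective (neg_injective h)

variable [DecidableEq M]

theorem LinearIndependent.sum_eq_sum_smul_of_subset (hv : LinearIndependent K v) {S : Finset M}
    (hS : S ⊆ univ.image v ∪ univ.image (-v)) :
    ∑ x ∈ S, x = ∑ i, ((if v i ∈ S then 1 else 0) - (if -v i ∈ S then 1 else 0) : K) • v i := by
  have hS' : (univ.filter fun a => Sum.elim v (-v) a ∈ S).image (Sum.elim v (-v)) = S := by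
    ext x
    simp only [mem_image, mem_filter, mem_univ, true_and]
    refine ⟨fun ⟨a, ha, hax⟩ => hax ▸ ha, fun hx => ?_⟩
    rcases mem_union.mp (hS hx) with hx' | hx' <;> obtain ⟨i, -, rfl⟩ := mem_image.mp hx'
    exacts [⟨.inl i, hx, rfl⟩, ⟨.inr i, hx, rfl⟩]
  conv_lhs => rw [← hS', sum_image hv.injective_sumElim_neg.injOn, sum_filter,
    Fintype.sum_sum_type, ← sum_add_distrib]
  refine sum_congr rfl fun i _ => ?_
  show (if v i ∈ S then v i else 0) + (if -v i ∈ S then -v i else 0) = _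
  split_ifs <;> simp

theorem LinearIndependent.subset_of_sum_eq_sum (hv : LinearIndependent K v) {F S : Finset M}
    (hF : F ⊆ univ.image v ∪ univ.image (-v)) (hS : S ⊆ univ.image v ∪ univ.image (-v))
    (hanti : ∀ x ∈ F, -x ∉ F) (hsum : ∑ x ∈ S, x = ∑ x ∈ F, x) : F ⊆ S := by
  rw [← sub_eq_zero, hv.sum_eq_sum_smul_of_subset hS, hv.sum_eq_sum_smul_of_subset hF,
    ← sum_sub_distrib] at hsum
  simp only [← sub_smul] at hsum
  have hcoef := Fintype.linearIndependent_iff.mp hv _ hsum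
  intro x hx
  rcases mem_union.mp (hF hx) with hx' | hx' <;> obtain ⟨i, -, rfl⟩ := mem_image.mp hx'
  · have h := hcoef i
    simp only [hx, hanti _ hx, if_true, if_false, sub_zero] at h
    by_contra hxS
    rw [if_neg hxS] at h
    split_ifs at h <;> norm_num at h
  · have h := hcoef i
    have hx' := hanti _ hx
    simp only [Pi.neg_apply, neg_neg] at hx hx' ⊢
    simp only [hx, hx', if_true, if_false] at h
    by_contra hxS
    rw [if_neg hxS] at h
    split_ifs at h <;> norm_num at h

end SignedSubsets

section FlipWhere

variable {ι α : Type*} [AddCommGroup α] (p : ι → Prop) [DecidablePred p]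

/-- `flip_A` of the paper, for `A = {j | p j}`. -/
def flipWhere (x : ι → α) : ι → α := fun j => if p j then -x j else x j

theorem flipWhere_involutive : Function.Involutive (flipWhere p (α := α)) := by
  intro x
  ext j
  by_cases h : p j <;> simp [flipWhere, h]

theorem flipWhere_neg (x : ι → α) : flipWhere p (-x) = -flipWhere p x := by
  ext j
  by_cases h : p j <;> simp [flipWhere, h]

theorem flipWhere_sum {κ : Type*} (s : Finset κ) (f : κ → ι → α) :
    flipWhere p (∑ i ∈ s, f i) = ∑ i ∈ s, flipWhere p (f i) := by
  ext j
  by_cases h : p j <;> simp [flipWhere, h, Finset.sum_apply]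

end FlipWhere

section PosCoords

variable {ι α : Type*} [Fintype ι] [One α] [DecidableEq α]

def posCoords (x : ι → α) : Finset ι := univ.filter fun e => x e = 1

@[simp]
theorem mem_posCoords {x : ι → α} {e : ι} : e ∈ posCoords x ↔ x e = 1 := by
  simp [posCoords]

theorem posCoords_ssubset_of_eq_off {x y : ι → α} {j : ι} (hxy : ∀ e ≠ j, x e = y e)
    (hx : x j ≠ 1) (hy : y j = 1) : posCoords x ⊂ posCoords y := by
  refine (ssubset_iff_of_subset fun e he => ?_).mpr ⟨j, by simpa using hy, by simpa using hx⟩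
  rw [mem_posCoords] at he ⊢
  rwa [← hxy e (by rintro rfl; exact hx he)]

variable [DecidableEq ι]

/-- `max⁺ W` of the paper; `posCoords x` is the positive part of a sign vector `x`. -/
def maxPos (W : Finset (ι → α)) : Finset (ι → α) :=
  W.filter fun O => ∀ P ∈ W, posCoords O ⊆ posCoords P → posCoords O = posCoords P

end PosCoords

/-- Indexed by all of `ℕ`, with `R (k + t) = -R k`; step `k` changes coordinate
`perm (k mod t)`. -/
structure SymmetricCycle (t : ℕ) [NeZero t] where
  R : ℕ → Fin t → ℝ
  perm : Equiv.Perm (Fin t)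
  sign : ∀ k j, R k j = -1 ∨ R k j = 1
  antiperiodic : Function.Antiperiodic R t
  step : ∀ k j, R (k + 1) j ≠ R k j ↔ j = perm (Fin.ofNat t k)

namespace SymmetricCycle

variable {t : ℕ} [NeZero t] (C : SymmetricCycle t)

def flipped (k : ℕ) : Fin t := C.perm (Fin.ofNat t k)

theorem flipped_perm_symm (j : Fin t) : C.flipped (C.perm.symm j) = j := by
  simp [flipped]

theorem flipped_eq_iff (a b : ℕ) : C.flipped a = C.flipped b ↔ a ≡ b [MOD t] := by
  simp [flipped, Fin.ext_iff, Nat.ModEq]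

theorem flipped_add_self (k : ℕ) : C.flipped (k + t) = C.flipped k :=
  (C.flipped_eq_iff _ _).mpr Nat.add_modEq_right

theorem periodic : Function.Periodic C.R (2 * t) := by
  simpa using C.antiperiodic.periodic_two_mul

theorem R_eq_of_modEq {a b : ℕ} (h : a ≡ b [MOD 2 * t]) : C.R a = C.R b := by
  rw [← C.periodic.map_mod_nat a, h, C.periodic.map_mod_nat]

theorem R_add_self (k : ℕ) (j : Fin t) : C.R (k + t) j = -C.R k j :=
  congrFun (C.antiperiodic k) j

theorem R_ne_zero (k : ℕ) (j : Fin t) : C.R k j ≠ 0 := by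
  rcases C.sign k j with h | h <;> simp [h]

theorem R_ne_one_iff (k : ℕ) (j : Fin t) : C.R k j ≠ 1 ↔ C.R k j = -1 := by
  rcases C.sign k j with h | h <;> norm_num [h]

theorem R_succ_of_ne {k : ℕ} {j : Fin t} (hj : j ≠ C.flipped k) : C.R (k + 1) j = C.R k j :=
  not_not.mp (mt (C.step k j).mp hj)

theorem R_succ_flipped (k : ℕ) : C.R (k + 1) (C.flipped k) = -C.R k (C.flipped k) := by
  have h := (C.step k (C.flipped k)).mpr rfl
  rcases C.sign (k + 1) (C.flipped k) with h1 | h1 <;>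
    rcases C.sign k (C.flipped k) with h2 | h2 <;> simp_all

theorem R_add_flipped_of_lt (k : ℕ) {i : ℕ} (hi : i < t) :
    C.R (k + 1 + i) (C.flipped k) = C.R (k + 1) (C.flipped k) := by
  induction i with
  | zero => rfl
  | succ i ih =>
    have hne : C.flipped k ≠ C.flipped (k + 1 + i) := by
      rw [ne_eq, flipped_eq_iff, add_assoc]
      intro h
      have := Nat.le_of_dvd (by omega) (Nat.add_modEq_left_iff.mp h.symm)
      omega
    rw [← add_assoc, C.R_succ_of_ne hne, ih (by omega)]

theorem R_add_flipped_eq_iff (k : ℕ) {i : ℕ} (hi : i < 2 * t) :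
    C.R (k + 1 + i) (C.flipped k) = C.R (k + 1) (C.flipped k) ↔ i < t := by
  refine ⟨fun h => ?_, C.R_add_flipped_of_lt k⟩
  by_contra hit
  obtain ⟨i, rfl⟩ := Nat.exists_eq_add_of_le (not_lt.mp hit)
  rw [add_comm t i, ← add_assoc, C.R_add_self, C.R_add_flipped_of_lt k (by omega),
    neg_eq_iff_add_eq_zero, ← two_mul] at h
  simp [C.R_ne_zero] at h

/-- The coordinate flipped just before `R k` is flipped back only half a period later, and
likewise for the one flipped just before `R (k + i)`. -/
theorem R_add_ne {k i : ℕ} (hi0 : 0 < i) (hi : i < 2 * t) : C.R (k + i) ≠ C.R k := by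
  intro h
  have h₁ : i < t := by
    have := C.R_add_flipped_eq_iff (k + 2 * t - 1) hi
    rwa [show k + 2 * t - 1 + 1 = k + 2 * t by omega, C.periodic, add_right_comm, C.periodic,
      h, eq_self_iff_true, true_iff] at this
  have h₂ : 2 * t - i < t := by
    have := C.R_add_flipped_eq_iff (k + i - 1) (i := 2 * t - i) (by omega)
    rwa [show k + i - 1 + 1 = k + i by omega, show k + i + (2 * t - i) = k + 2 * t by omega,
      C.periodic, h, eq_self_iff_true, true_iff] at this
  omega

theorem R_eq_R_iff {a b : ℕ} : C.R a = C.R b ↔ a ≡ b [MOD 2 * t] := by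
  refine ⟨fun h => ?_, C.R_eq_of_modEq⟩
  rw [← C.periodic.map_mod_nat a, ← C.periodic.map_mod_nat b] at h
  have ha := Nat.mod_lt a (NeZero.pos (2 * t))
  have hb := Nat.mod_lt b (NeZero.pos (2 * t))
  rcases lt_trichotomy (a % (2 * t)) (b % (2 * t)) with hab | hab | hab
  · have := C.R_add_ne (k := a % (2 * t)) (i := b % (2 * t) - a % (2 * t)) (by omega) (by omega)
    rw [Nat.add_sub_cancel' hab.le] at this
    exact absurd h.symm this
  · exact hab
  · have := C.R_add_ne (k := b % (2 * t)) (i := a % (2 * t) - b % (2 * t)) (by omega) (by omega)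
    rw [Nat.add_sub_cancel' hab.le] at this
    exact absurd h this

theorem exists_R_eq_R_add (k m : ℕ) : ∃ i < 2 * t, C.R m = C.R (k + i) := by
  have hk := Nat.mod_lt k (NeZero.pos (2 * t))
  refine ⟨(m % (2 * t) + 2 * t - k % (2 * t)) % (2 * t), Nat.mod_lt _ (NeZero.pos (2 * t)),
    C.R_eq_of_modEq ?_⟩
  calc m ≡ m % (2 * t) + 2 * t [MOD 2 * t] :=
        (Nat.mod_modEq m _).symm.trans Nat.add_modEq_right.symm
    _ = k % (2 * t) + (m % (2 * t) + 2 * t - k % (2 * t)) := by omega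
    _ ≡ k + (m % (2 * t) + 2 * t - k % (2 * t)) % (2 * t) [MOD 2 * t] :=
      (Nat.mod_modEq k _).add (Nat.mod_modEq _ _).symm

def IsRise (k : ℕ) : Prop := C.R (k + 1) (C.flipped k) = 1

def IsPeak (k : ℕ) : Prop := C.IsRise k ∧ ¬C.IsRise (k + 1)

noncomputable instance : DecidablePred C.IsPeak := Classical.decPred _

theorem isRise_add_self (k : ℕ) : C.IsRise (k + t) ↔ ¬C.IsRise k := by
  rw [IsRise, IsRise, C.flipped_add_self, add_right_comm, C.R_add_self, ← ne_eq, C.R_ne_one_iff,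
    neg_eq_iff_eq_neg]

theorem exists_flipped_eq_isRise (j : Fin t) : ∃ b, C.flipped b = j ∧ C.IsRise b := by
  by_cases h : C.IsRise (C.perm.symm j)
  · exact ⟨_, C.flipped_perm_symm j, h⟩
  · exact ⟨_ + t, by rw [C.flipped_add_self, C.flipped_perm_symm],
      (C.isRise_add_self _).mpr h⟩

theorem R_flipped_of_not_isRise {k : ℕ} (h : ¬C.IsRise k) : C.R k (C.flipped k) = 1 := by
  rwa [IsRise, ← ne_eq, C.R_ne_one_iff, C.R_succ_flipped, neg_inj] at h

theorem isPeak_add_self (k : ℕ) : C.IsPeak (k + t) ↔ ¬C.IsRise k ∧ C.IsRise (k + 1) := by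
  rw [IsPeak, C.isRise_add_self, add_right_comm, C.isRise_add_self, not_not]

variable {C} in
theorem IsPeak.not_add_self {k : ℕ} (h : C.IsPeak k) : ¬C.IsPeak (k + t) :=
  fun h' => ((C.isPeak_add_self k).mp h').1 h.1

theorem isPeak_periodic : Function.Periodic C.IsPeak (2 * t) := by
  intro k
  simp only [IsPeak, two_mul, ← add_assoc, add_right_comm _ t 1, C.isRise_add_self, not_not]

theorem posCoords_ssubset_succ_of_isRise {k : ℕ} (h : C.IsRise k) :
    posCoords (C.R k) ⊂ posCoords (C.R (k + 1)) := by
  refine posCoords_ssubset_of_eq_off (fun _ he => (C.R_succ_of_ne he).symm) ?_ h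
  rw [IsRise, C.R_succ_flipped, neg_eq_iff_eq_neg] at h
  norm_num [h]

theorem posCoords_succ_ssubset_of_not_isRise {k : ℕ} (h : ¬C.IsRise k) :
    posCoords (C.R (k + 1)) ⊂ posCoords (C.R k) :=
  posCoords_ssubset_of_eq_off (fun _ he => C.R_succ_of_ne he) h (C.R_flipped_of_not_isRise h)

/-- Away from a peak a neighbour of `R (k + 1)` has a strictly larger positive part; at a peak,
the coordinates flipped at steps `k` and `k + 1` are positive on two half-periods that meet only
at `k + 1`. -/
theorem maximal_posCoords_iff (k : ℕ) :
    (∀ m, posCoords (C.R (k + 1)) ⊆ posCoords (C.R m) →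
      posCoords (C.R (k + 1)) = posCoords (C.R m)) ↔ C.IsPeak k := by
  refine ⟨fun hmax => ⟨?_, fun h => ?_⟩, fun ⟨hrise, hfall⟩ m hsub => ?_⟩
  · by_contra h
    have hlt := C.posCoords_succ_ssubset_of_not_isRise h
    exact hlt.ne (hmax k hlt.subset)
  · have hlt := C.posCoords_ssubset_succ_of_isRise h
    exact hlt.ne (hmax _ hlt.subset)
  obtain ⟨i, hi, hm⟩ := C.exists_R_eq_R_add (k + 1) m
  have hpos : ∀ {j}, C.R (k + 1) j = 1 → C.R m j = 1 := fun hj =>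
    mem_posCoords.mp (hsub (mem_posCoords.mpr hj))
  have hit : i < t := (C.R_add_flipped_eq_iff k hi).mp (by rw [← hm, hpos hrise, hrise])
  obtain rfl : i = 0 := by
    by_contra hi0
    have := C.R_add_flipped_of_lt (k + 1) (i := i - 1) (by omega)
    rw [show k + 1 + 1 + (i - 1) = k + 1 + i by omega, ← hm,
      hpos (C.R_flipped_of_not_isRise hfall)] at this
    exact hfall this.symm
  rw [hm, add_zero]

noncomputable def vertices : Finset (Fin t → ℝ) :=
  (univ.image fun k : Fin t => C.R k) ∪ univ.image fun k : Fin t => -C.R k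

theorem mem_vertices {x : Fin t → ℝ} : x ∈ C.vertices ↔ ∃ k, C.R k = x := by
  simp only [vertices, mem_union, mem_image, mem_univ, true_and]
  refine ⟨?_, fun ⟨k, hk⟩ => ?_⟩
  · rintro (⟨k, rfl⟩ | ⟨k, rfl⟩)
    exacts [⟨k, rfl⟩, ⟨k + t, C.antiperiodic k⟩]
  rw [← C.periodic.map_mod_nat] at hk
  have hlt := Nat.mod_lt k (NeZero.pos (2 * t))
  by_cases hkt : k % (2 * t) < t
  · exact .inl ⟨⟨_, hkt⟩, hk⟩
  · refine .inr ⟨⟨k % (2 * t) - t, by omega⟩, ?_⟩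
    rw [← hk, ← C.antiperiodic, Nat.sub_add_cancel (not_lt.mp hkt)]

noncomputable def peakVertices : Finset (Fin t → ℝ) :=
  ((range (2 * t)).filter C.IsPeak).image fun k => C.R (k + 1)

theorem mem_peakVertices {x : Fin t → ℝ} :
    x ∈ C.peakVertices ↔ ∃ k, C.IsPeak k ∧ C.R (k + 1) = x := by
  simp only [peakVertices, mem_image, mem_filter, mem_range]
  refine ⟨fun ⟨k, ⟨_, hk⟩, hx⟩ => ⟨k, hk, hx⟩, fun ⟨k, hk, hx⟩ => ?_⟩
  refine ⟨k % (2 * t), ⟨Nat.mod_lt k (NeZero.pos (2 * t)), ?_⟩, ?_⟩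
  · rwa [C.isPeak_periodic.map_mod_nat]
  · rw [← hx]
    exact C.R_eq_of_modEq ((Nat.mod_modEq k _).add_right 1)

theorem maxPos_vertices : maxPos C.vertices = C.peakVertices := by
  ext x
  simp only [maxPos, mem_filter, mem_vertices, mem_peakVertices, forall_exists_index,
    forall_apply_eq_imp_iff]
  constructor
  · rintro ⟨⟨m, rfl⟩, hmax⟩
    have hm : C.R (m + (2 * t - 1) + 1) = C.R m := by
      rw [show m + (2 * t - 1) + 1 = m + 2 * t by have := NeZero.pos t; omega, C.periodic]
    exact ⟨_, (C.maximal_posCoords_iff _).mp (hm ▸ hmax), hm⟩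
  · rintro ⟨k, hk, rfl⟩
    exact ⟨⟨k + 1, rfl⟩, (C.maximal_posCoords_iff k).mpr hk⟩

theorem neg_notMem_peakVertices {x : Fin t → ℝ} (hx : x ∈ C.peakVertices) :
    -x ∉ C.peakVertices := by
  obtain ⟨k, hk, rfl⟩ := C.mem_peakVertices.mp hx
  intro hneg
  obtain ⟨m, hm, hmk⟩ := C.mem_peakVertices.mp hneg
  rw [← C.antiperiodic, add_right_comm, C.R_eq_R_iff] at hmk
  refine hk.not_add_self ?_
  rwa [← C.isPeak_periodic.map_mod_nat, ← Nat.ModEq.add_right_cancel' 1 hmk,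
    C.isPeak_periodic.map_mod_nat]

/-- Starting the period at a step `b` that turns `j` positive, the peaks in the half-period where
`j` is positive contribute `+1`, those in the other half `-1`, and the resulting sum telescopes
to `[b rises] - [b + t rises] = 1`. -/
theorem sum_isPeak_apply (j : Fin t) :
    ∑ k ∈ (range (2 * t)).filter C.IsPeak, C.R (k + 1) j = 1 := by
  classical
  obtain ⟨b, rfl, hb⟩ := C.exists_flipped_eq_isRise j
  set f : ℕ → ℝ := fun k => if C.IsPeak k then C.R (k + 1) (C.flipped b) else 0
  set g : ℕ → ℝ := fun k => if C.IsRise k then 1 else 0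
  have hf : Function.Periodic f (2 * t) := fun k => by
    simp only [f, C.isPeak_periodic k, add_right_comm k, C.periodic (k + 1)]
  have hpair : ∀ i < t, f (b + i) + f (b + (t + i)) = g (b + i) - g (b + i + 1) := by
    intro i hi
    have hpos : C.R (b + i + 1) (C.flipped b) = 1 := by
      rw [add_right_comm, C.R_add_flipped_of_lt b hi, hb]
    have hneg : C.R (b + (t + i) + 1) (C.flipped b) = -1 := by
      rw [show b + (t + i) + 1 = b + i + 1 + t by omega, C.R_add_self, hpos]
    have hpeak : C.IsPeak (b + (t + i)) ↔ ¬C.IsRise (b + i) ∧ C.IsRise (b + i + 1) := by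
      rw [← add_assoc, add_right_comm, C.isPeak_add_self]
    simp only [f, g, hpeak, hneg, hpos]
    by_cases h₁ : C.IsRise (b + i) <;> by_cases h₂ : C.IsRise (b + i + 1) <;>
      simp [IsPeak, h₁, h₂]
  calc ∑ k ∈ (range (2 * t)).filter C.IsPeak, C.R (k + 1) (C.flipped b)
      = ∑ k ∈ range (2 * t), f (b + k) := by rw [sum_filter, hf.sum_range_add]
    _ = ∑ i ∈ range t, (g (b + i) - g (b + (i + 1))) := by
      rw [two_mul, sum_range_add, ← sum_add_distrib]
      exact sum_congr rfl fun i hi => hpair i (mem_range.mp hi)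
    _ = 1 := by
      rw [sum_range_sub' (fun i => g (b + i))]
      simp [g, hb, C.isRise_add_self]

theorem sum_peakVertices : ∑ x ∈ C.peakVertices, x = 1 := by
  rw [peakVertices, sum_image]
  · ext j
    simpa [Finset.sum_apply] using C.sum_isPeak_apply j
  · intro a ha b hb hab
    simp only [coe_filter, mem_range, Set.mem_ofPred_eq] at ha hb
    exact ((C.R_eq_R_iff.mp hab).add_right_cancel' 1).eq_of_lt_of_lt ha.1 hb.1

theorem sub_R_succ (k : ℕ) :
    C.R k - C.R (k + 1) = Pi.single (C.flipped k) (2 * C.R k (C.flipped k)) := by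
  ext j
  by_cases hj : j = C.flipped k
  · subst hj
    simp [C.R_succ_flipped, two_mul]
  · simp [C.R_succ_of_ne hj, hj]

theorem linearIndependent : LinearIndependent ℝ fun k : Fin t => C.R k := by
  refine linearIndependent_of_top_le_span_of_card_eq_finrank ?_ (by simp)
  set S := Submodule.span ℝ (Set.range fun k : Fin t => C.R k)
  have hR : ∀ k ≤ t, C.R k ∈ S := by
    intro k hk
    rcases hk.lt_or_eq with hk | hk
    · exact Submodule.subset_span ⟨⟨k, hk⟩, rfl⟩
    · rw [hk, show C.R t = -C.R 0 by simpa using C.antiperiodic 0]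
      exact S.neg_mem (Submodule.subset_span ⟨⟨0, NeZero.pos t⟩, rfl⟩)
  have hsingle : ∀ k < t, Pi.single (C.flipped k) (1 : ℝ) ∈ S := by
    intro k hk
    have h := S.sub_mem (hR k hk.le) (hR (k + 1) hk)
    rw [C.sub_R_succ, ← mul_one (2 * _), ← smul_eq_mul, Pi.single_smul'] at h
    exact (S.smul_mem_iff (mul_ne_zero two_ne_zero (C.R_ne_zero _ _))).mp h
  rw [← (Pi.basisFun ℝ (Fin t)).span_eq, Submodule.span_le]
  rintro _ ⟨j, rfl⟩
  rw [Pi.basisFun_apply, ← C.flipped_perm_symm j]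
  exact hsingle _ (C.perm.symm j).isLt

def flip (p : Fin t → Prop) [DecidablePred p] : SymmetricCycle t where
  R k := flipWhere p (C.R k)
  perm := C.perm
  sign k j := by
    unfold flipWhere
    split_ifs <;> rcases C.sign k j with h | h <;> simp [h]
  antiperiodic k := by simp only [C.antiperiodic k, flipWhere_neg]
  step k j := by
    unfold flipWhere
    split_ifs <;> simpa only [ne_eq, neg_inj] using C.step k j

variable (p : Fin t → Prop) [DecidablePred p]

theorem vertices_flip : (C.flip p).vertices = C.vertices.image (flipWhere p) := by
  ext x
  simp only [mem_vertices, mem_image]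
  exact ⟨fun ⟨k, hk⟩ => ⟨C.R k, ⟨k, rfl⟩, hk⟩, fun ⟨_, ⟨k, rfl⟩, hk⟩ => ⟨k, hk⟩⟩

/-- `Q(T, R)` of the paper, for `T⁻ = {j | p j}`. -/
noncomputable def decomposition : Finset (Fin t → ℝ) :=
  (maxPos (C.flip p).vertices).image (flipWhere p)

theorem decomposition_eq_image_peakVertices :
    C.decomposition p = (C.flip p).peakVertices.image (flipWhere p) := by
  rw [decomposition, maxPos_vertices]

theorem decomposition_subset_vertices : C.decomposition p ⊆ C.vertices :=
  calc C.decomposition p ⊆ (C.flip p).vertices.image (flipWhere p) :=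
        image_subset_image (filter_subset _ _)
    _ = C.vertices := by
      rw [vertices_flip, image_image, (flipWhere_involutive p).comp_self, image_id]

theorem sum_decomposition : ∑ x ∈ C.decomposition p, x = flipWhere p 1 := by
  rw [decomposition_eq_image_peakVertices, sum_image (flipWhere_involutive p).injective.injOn,
    ← flipWhere_sum, sum_peakVertices]

theorem neg_notMem_decomposition {x : Fin t → ℝ} (hx : x ∈ C.decomposition p) :
    -x ∉ C.decomposition p := by
  rw [decomposition_eq_image_peakVertices] at hx ⊢
  obtain ⟨y, hy, rfl⟩ := mem_image.mp hx
  rw [← flipWhere_neg, (flipWhere_involutive p).injective.mem_finset_image]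
  exact (C.flip p).neg_notMem_peakVertices hy

theorem decomposition_subset {S : Finset (Fin t → ℝ)} (hS : S ⊆ C.vertices)
    (hsum : ∑ x ∈ S, x = ∑ x ∈ C.decomposition p, x) : C.decomposition p ⊆ S :=
  C.linearIndependent.subset_of_sum_eq_sum (C.decomposition_subset_vertices p) hS
    (fun _ => C.neg_notMem_decomposition p) hsum

end SymmetricCycle

namespace SymmetricCycle

variable {t : ℕ} [NeZero t] (R : Fin (t + 1) → Fin t → ℝ)

noncomputable def extend (k : ℕ) : Fin t → ℝ := (-1 : ℝ) ^ (k / t) • R (Fin.ofNat t k).castSucc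

theorem extend_of_lt (k : Fin t) : extend R k = R k.castSucc := by
  simp [extend, Nat.div_eq_of_lt k.isLt]

theorem extend_add_self (k : ℕ) : extend R (k + t) = -extend R k := by
  have : Fin.ofNat t (k + t) = Fin.ofNat t k := by ext; simp
  rw [extend, extend, this, Nat.add_div_right k (NeZero.pos t), pow_succ, mul_neg_one, neg_smul]

theorem extend_succ (hRt : R (Fin.last t) = -R 0) (k : ℕ) :
    extend R (k + 1) = (-1 : ℝ) ^ (k / t) • R (Fin.ofNat t k).succ := by
  have ht := NeZero.pos t
  obtain ⟨q, r, hr, rfl⟩ : ∃ q r, r < t ∧ k = r + t * q :=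
    ⟨k / t, k % t, Nat.mod_lt k ht, (Nat.mod_add_div k t).symm⟩
  have hr' : Fin.ofNat t (r + t * q) = ⟨r, hr⟩ := by ext; simp [Nat.mod_eq_of_lt hr]
  rw [extend, hr', add_right_comm, Nat.add_mul_div_left _ _ ht, Nat.add_mul_div_left _ _ ht,
    Nat.div_eq_of_lt hr, zero_add]
  rcases Nat.lt_or_ge (r + 1) t with hr1 | hr1
  · have : (Fin.ofNat t (r + 1 + t * q)).castSucc = (⟨r, hr⟩ : Fin t).succ := by
      ext; simp [Nat.mod_eq_of_lt hr1]
    rw [Nat.div_eq_of_lt hr1, zero_add, this]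
  · replace hr1 : r + 1 = t := by omega
    have h0 : (Fin.ofNat t (r + 1 + t * q)).castSucc = 0 := by ext; simp [hr1]
    have hlast : (⟨r, hr⟩ : Fin t).succ = Fin.last t := by ext; simp [hr1]
    rw [h0, hr1, Nat.div_self ht, hlast, hRt, add_comm 1 q, pow_succ, smul_neg, mul_neg_one,
      neg_smul]

noncomputable def ofPath (hsign : ∀ k j, R k j = -1 ∨ R k j = 1) (hRt : R (Fin.last t) = -R 0)
    {l : Fin t → Fin t} (hl : Function.Bijective l)
    (hstep : ∀ k j, R k.castSucc j ≠ R k.succ j ↔ j = l k) : SymmetricCycle t where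
  R := extend R
  perm := Equiv.ofBijective l hl
  sign k j := by
    simp only [extend, Pi.smul_apply, smul_eq_mul]
    rcases hsign (Fin.ofNat t k).castSucc j with h | h <;>
      rcases neg_one_pow_eq_or ℝ (k / t) with h' | h' <;> rw [h, h'] <;> norm_num
  antiperiodic := extend_add_self R
  step k j := by
    rw [extend_succ R hRt, extend, Ne, Pi.smul_apply, Pi.smul_apply,
      smul_right_inj (pow_ne_zero _ (by norm_num)), ← Ne, ne_comm]
    exact hstep _ j

end SymmetricCycle

open Finset Matrix

theorem stmt_12 (t : ℕ) (ht : 0 < t)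
    (R : Fin (t + 1) → Fin t → ℝ)
    (hsign : ∀ k j, R k j = -1 ∨ R k j = 1)
    (hRt : R (Fin.last t) = -(R 0))
    (l : Fin t → Fin t) (hl : Function.Bijective l)
    (hstep : ∀ (k : Fin t) (j : Fin t), R k.castSucc j ≠ R k.succ j ↔ j = l k)
    (V : Finset (Fin t → ℝ))
    (hV : V = (Finset.univ.image fun k : Fin t => R k.castSucc)
        ∪ (Finset.univ.image fun k : Fin t => -(R k.castSucc)))
    (T : Fin t → ℝ) (hT : ∀ j, T j = -1 ∨ T j = 1)
    (W F : Finset (Fin t → ℝ))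
    (hW : W = V.image fun X j => if T j = -1 then -X j else X j)
    (hF : F = (W.filter fun O => ∀ P ∈ W,
        (Finset.univ.filter fun e => O e = 1) ⊆ (Finset.univ.filter fun e => P e = 1)
          → (Finset.univ.filter fun e => O e = 1)
              = (Finset.univ.filter fun e => P e = 1)).image
      fun X j => if T j = -1 then -X j else X j) :
    (∑ q ∈ F, q) = T ∧
    ∀ S : Finset (Fin t → ℝ), S ⊆ V → (∑ q ∈ S, q) = T → F ⊆ S := by
  have : NeZero t := ⟨ht.ne'⟩
  set C := SymmetricCycle.ofPath R hsign hRt hl hstep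
  have hVC : V = C.vertices := by
    simp only [hV, SymmetricCycle.vertices, C, SymmetricCycle.ofPath,
      SymmetricCycle.extend_of_lt]
  have hWC : W = (C.flip fun j => T j = -1).vertices := by
    rw [C.vertices_flip, ← hVC]
    exact hW
  have hFC : F = C.decomposition fun j => T j = -1 := by
    rw [hWC] at hF
    exact hF
  have hsumF : ∑ q ∈ F, q = T := by
    rw [hFC, C.sum_decomposition]
    ext j
    rcases hT j with h | h <;> norm_num [flipWhere, h]
  refine ⟨hsumF, fun S hS hsumS => hFC ▸ C.decomposition_subset _ (hVC ▸ hS) ?_⟩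
  rw [hsumS, ← hFC, hsumF]
end

section
/- With V(R) as above, the set min V(R) of minimal elements of (V(R), ⪯_{T⁺}) is a critical tope committee: Σ_{Q ∈ min V(R)} Q = T⁺, and no proper subset K ⊊ min V(R) satisfies Σ_{Q ∈ K} Q ≥ T⁺ coordinatewise. -/
/-!
Extended by `R^{k+t} = -R^k`, the topes form a cycle indexed by `ZMod (2t)`, and each coordinate
`j` is negative exactly on a half-circle `(a j, a j + t]`, where every antipodal pair `{x, x + t}`
contains exactly one of the points `a j`. The minimal topes are the local minima of the negative
set along the cycle. In a fixed coordinate, pairing each minimum `k` with `k + t` makes their sum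
telescope to `1`. If a nonempty set `E` of minima had all coordinate sums `≤ 0`, then reading the
coordinate `j` with `a j = k₀` shows that at least half of `E` lies in `(k₀, k₀ + t]` for every
`k₀ ∈ E`; but of two distinct points of `E` exactly one lies in the half-circle of the other, so
these counts add up to only `|E|(|E| - 1)/2`.
-/

open Finset

lemma ZMod.val_add_eq_ite {n : ℕ} [NeZero n] (a b : ZMod n) :
    (a + b).val = if a.val + b.val < n then a.val + b.val else a.val + b.val - n := by
  split_ifs with h
  exacts [ZMod.val_add_of_lt h, ZMod.val_add_of_le (not_lt.1 h)]

namespace TopeCycle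

section HalfCircle

variable {t : ℕ}

lemma natCast_t_add_self : (t : ZMod (2 * t)) + t = 0 := by
  rw [← two_mul]; exact_mod_cast ZMod.natCast_self (2 * t)

lemma neg_natCast_t : -(t : ZMod (2 * t)) = t :=
  neg_eq_of_add_eq_zero_left natCast_t_add_self

lemma sub_add_natCast_t (x y : ZMod (2 * t)) : x - (y + t) = x - y + t := by
  rw [sub_add_eq_sub_sub, sub_eq_add_neg _ (t : ZMod (2 * t)), neg_natCast_t]

def InHalf (d : ZMod (2 * t)) : Prop := 1 ≤ d.val ∧ d.val ≤ t

instance : DecidablePred (InHalf (t := t)) := fun _ => inferInstanceAs (Decidable (_ ∧ _))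

lemma not_inHalf_zero : ¬InHalf (0 : ZMod (2 * t)) := by simp [InHalf]

variable [NeZero t]

lemma val_natCast_of_le {c : ℕ} (hc : c ≤ t) : (c : ZMod (2 * t)).val = c :=
  ZMod.val_natCast_of_lt (by have := NeZero.pos t; omega)

lemma val_one_two_mul : (1 : ZMod (2 * t)).val = 1 :=
  ZMod.val_one'' (by have := NeZero.pos t; omega)

lemma one_ne_zero_two_mul : (1 : ZMod (2 * t)) ≠ 0 := by
  rw [Ne, ← ZMod.val_eq_zero, val_one_two_mul]; exact one_ne_zero

lemma eq_natCast_t_iff {d : ZMod (2 * t)} : d = t ↔ d.val = t := by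
  rw [← (ZMod.val_injective _).eq_iff, val_natCast_of_le le_rfl]

lemma inHalf_natCast {c : ℕ} (h1 : 1 ≤ c) (h2 : c ≤ t) : InHalf (c : ZMod (2 * t)) := by
  rw [InHalf, val_natCast_of_le h2]; exact ⟨h1, h2⟩

lemma inHalf_natCast_t : InHalf (t : ZMod (2 * t)) := inHalf_natCast NeZero.one_le le_rfl

lemma inHalf_add_t (d : ZMod (2 * t)) : InHalf (d + (t : ZMod (2 * t))) ↔ ¬InHalf d := by
  have := ZMod.val_lt d
  simp only [InHalf, ZMod.val_add_eq_ite, val_natCast_of_le le_rfl]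
  split_ifs <;> omega

lemma inHalf_neg {d : ZMod (2 * t)} (h0 : d ≠ 0) (ht : d ≠ t) : InHalf (-d) ↔ ¬InHalf d := by
  have := ZMod.val_lt d
  have := (ZMod.val_ne_zero d).2 h0
  rw [Ne, eq_natCast_t_iff] at ht
  simp only [InHalf, ZMod.neg_val, if_neg h0]
  omega

lemma inHalf_add_one (d : ZMod (2 * t)) : InHalf (d + 1) ↔ d = 0 ∨ (InHalf d ∧ d ≠ t) := by
  have := ZMod.val_lt d
  rw [Ne, eq_natCast_t_iff, ← ZMod.val_eq_zero]
  simp only [InHalf, ZMod.val_add_eq_ite, val_one_two_mul]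
  split_ifs <;> omega

lemma inHalf_natCast_sub_natCast {k m : ℕ} (hk : k < t) (hm : m < t) :
    InHalf ((k : ZMod (2 * t)) - (m : ZMod (2 * t))) ↔ m < k := by
  have hk' := val_natCast_of_le (t := t) hk.le
  have hm' := val_natCast_of_le (t := t) hm.le
  rcases le_or_gt m k with h | h
  · rw [InHalf, ZMod.val_sub (by omega), hk', hm']
    omega
  · have h0 : (m : ZMod (2 * t)) - k ≠ 0 := by
      rw [Ne, ← ZMod.val_eq_zero, ZMod.val_sub (by omega)]; omega
    have ht : (m : ZMod (2 * t)) - k ≠ t := by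
      rw [Ne, eq_natCast_t_iff, ZMod.val_sub (by omega)]; omega
    rw [← neg_sub, inHalf_neg h0 ht, InHalf, ZMod.val_sub (by omega), hk', hm']
    omega

lemma exists_natCast_eq_or_eq_add_t (x : ZMod (2 * t)) :
    ∃ k < t, x = k ∨ x = k + t := by
  have := ZMod.val_lt x
  rcases lt_or_ge x.val t with h | h
  · exact ⟨x.val, h, Or.inl (ZMod.natCast_zmod_val x).symm⟩
  · refine ⟨x.val - t, by omega, Or.inr ?_⟩
    rw [← Nat.cast_add, Nat.sub_add_cancel h, ZMod.natCast_zmod_val]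

lemma sum_eq_sum_range_add_t {M : Type*} [AddCommMonoid M] (f : ZMod (2 * t) → M)
    (x : ZMod (2 * t)) : ∑ k, f k = ∑ i ∈ range t, (f (x + i) + f (x + i + t)) := by
  have hbij : Function.Bijective fun i : Fin (2 * t) => x + (i : ℕ) := by
    refine (Fintype.bijective_iff_injective_and_card _).2 ⟨fun i j h => ?_, by simp⟩
    have h := congrArg ZMod.val (add_left_cancel h)
    rwa [ZMod.val_natCast_of_lt i.2, ZMod.val_natCast_of_lt j.2, Fin.val_inj] at h
  have h := sum_range_add (fun i => f (x + i)) t t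
  simp only [Nat.cast_add, ← add_assoc, ← two_mul, add_right_comm x (t : ZMod (2 * t))] at h
  rw [sum_add_distrib, ← h, ← Fin.sum_univ_eq_sum_range (fun i => f (x + i))]
  exact (Fintype.sum_bijective _ hbij _ _ fun _ => rfl).symm

end HalfCircle

section Topes

variable {t : ℕ} {ι : Type*} {a : ι → ZMod (2 * t)}

/-- The `k`-th tope of the cycle in which coordinate `j` is negative exactly on the half-circle
`(a j, a j + t]`; it plays the role of the paper's `R^k`, with `k` read modulo `2t`. -/
noncomputable def tope (a : ι → ZMod (2 * t)) (k : ZMod (2 * t)) : ι → ℝ :=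
  fun j => if InHalf (k - a j) then -1 else 1

def IsAntipodalTransversal (a : ι → ZMod (2 * t)) : Prop :=
  ∀ x, x + (t : ZMod (2 * t)) ∈ Set.range a ↔ x ∉ Set.range a

lemma tope_eq_neg_one_iff {k : ZMod (2 * t)} {j : ι} : tope a k j = -1 ↔ InHalf (k - a j) := by
  unfold tope; split_ifs with h <;> norm_num [h]

lemma sum_tope_apply (E : Finset (ZMod (2 * t))) (j : ι) :
    ∑ k ∈ E, tope a k j = #E - 2 * #{k ∈ E | InHalf (k - a j)} := by
  rw [card_eq_sum_ones, card_filter]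
  push_cast
  rw [mul_sum, ← sum_sub_distrib]
  refine sum_congr rfl fun k _ => ?_
  unfold tope
  split_ifs <;> norm_num

lemma IsAntipodalTransversal.sub_ne (hS : IsAntipodalTransversal a) {k m : ZMod (2 * t)}
    (hk : k ∈ Set.range a) (hm : m ∈ Set.range a) : k - m ≠ t := by
  intro h
  rw [sub_eq_iff_eq_add'] at h
  exact (hS m).1 (h ▸ hk) hm

variable [NeZero t]

lemma tope_add_t (k : ZMod (2 * t)) : tope a (k + t) = -tope a k := by
  ext j
  simp only [tope, Pi.neg_apply, add_sub_right_comm, inHalf_add_t]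
  split_ifs <;> norm_num

lemma isAntipodalTransversal_of_injective [Fintype ι] (hcard : Fintype.card ι = t)
    (hinj : Function.Injective a) (hanti : ∀ i j, a i ≠ a j + t) : IsAntipodalTransversal a := by
  classical
  intro x
  refine ⟨fun ⟨i, hi⟩ ⟨j, hj⟩ => hanti i j (hi.trans (hj ▸ rfl)), fun hx => ?_⟩
  let b : ι ⊕ ι → ZMod (2 * t) := Sum.elim a fun j => a j + t
  have hb : Function.Injective b := by
    rintro (i | i) (j | j) h <;> simp only [b, Sum.elim_inl, Sum.elim_inr] at h
    exacts [congrArg _ (hinj h), absurd h (hanti i j), absurd h.symm (hanti j i),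
      congrArg _ (hinj (add_right_cancel h))]
  have hcard' : Fintype.card (ι ⊕ ι) = Fintype.card (ZMod (2 * t)) := by
    simp [hcard, ZMod.card, two_mul]
  obtain ⟨i | i, hi⟩ := ((Fintype.bijective_iff_injective_and_card b).2 ⟨hb, hcard'⟩).2 x
  · exact absurd ⟨i, hi⟩ hx
  · refine ⟨i, ?_⟩
    simp only [b, Sum.elim_inr] at hi
    rw [← hi, add_assoc, natCast_t_add_self, add_zero]

lemma IsAntipodalTransversal.exists_not_iff_of_inHalf (hS : IsAntipodalTransversal a)
    {k m : ZMod (2 * t)} (h : InHalf (m - k)) : ∃ j, ¬(InHalf (m - a j) ↔ InHalf (k - a j)) := by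
  by_cases hk : k ∈ Set.range a
  · obtain ⟨j, rfl⟩ := hk
    exact ⟨j, by rw [sub_self]; exact fun h' => not_inHalf_zero (h'.1 h)⟩
  · obtain ⟨j, hj⟩ := (hS k).2 hk
    refine ⟨j, fun h' => ?_⟩
    rw [hj, sub_add_natCast_t, sub_add_natCast_t, inHalf_add_t, inHalf_add_t, sub_self] at h'
    exact h'.2 not_inHalf_zero h

lemma IsAntipodalTransversal.tope_injective (hS : IsAntipodalTransversal a) :
    Function.Injective (tope a) := by
  have key {m k : ZMod (2 * t)} (hmk : InHalf (m - k)) : tope a m ≠ tope a k := fun h => by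
    obtain ⟨j, hj⟩ := hS.exists_not_iff_of_inHalf hmk
    exact hj (by rw [← tope_eq_neg_one_iff, ← tope_eq_neg_one_iff, h])
  intro m k h
  by_contra hne
  by_cases hmk : InHalf (m - k)
  · exact key hmk h
  · refine key ?_ h.symm
    rw [← neg_sub, inHalf_neg (sub_ne_zero.2 hne) (fun h => hmk (h ▸ inHalf_natCast_t))]
    exact hmk

open Classical in
/-- Going from `k` to `k + 1`, the negative set of `tope a` gains a coordinate if `k ∈ range a`
and loses one otherwise, so these are the local minima of the negative set along the cycle. -/
noncomputable def localMins (a : ι → ZMod (2 * t)) : Finset (ZMod (2 * t)) :=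
  univ.filter fun k => k ∈ Set.range a ∧ k - 1 ∉ Set.range a

lemma mem_localMins {k : ZMod (2 * t)} :
    k ∈ localMins a ↔ k ∈ Set.range a ∧ k - 1 ∉ Set.range a := by
  simp only [localMins, mem_filter, mem_univ, true_and]

lemma IsAntipodalTransversal.exists_inHalf_of_mem_localMins (hS : IsAntipodalTransversal a)
    {k m : ZMod (2 * t)} (hk : k ∈ localMins a) (hne : m ≠ k) :
    ∃ j, InHalf (m - a j) ∧ ¬InHalf (k - a j) := by
  by_cases hmk : InHalf (m - k)
  · obtain ⟨j, rfl⟩ := (mem_localMins.1 hk).1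
    exact ⟨j, hmk, by rw [sub_self]; exact not_inHalf_zero⟩
  obtain ⟨j, hj⟩ := (hS (k - 1)).2 (mem_localMins.1 hk).2
  refine ⟨j, ?_, ?_⟩
  · rw [hj, sub_add_natCast_t, inHalf_add_t, show m - (k - 1) = m - k + 1 by ring, inHalf_add_one]
    push Not
    exact ⟨sub_ne_zero.2 hne, fun h => absurd h hmk⟩
  · rw [hj, sub_add_natCast_t, inHalf_add_t, not_not, show k - (k - 1) = 0 + 1 by ring,
      inHalf_add_one]
    exact Or.inl rfl

lemma IsAntipodalTransversal.exists_ne_inHalf_imp_of_not_mem_localMins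
    (hS : IsAntipodalTransversal a) {k : ZMod (2 * t)} (hk : k ∉ localMins a) :
    ∃ m ≠ k, ∀ j, InHalf (m - a j) → InHalf (k - a j) := by
  rw [mem_localMins, not_and, not_not] at hk
  by_cases hA : k ∈ Set.range a
  · refine ⟨k - 1, fun h => one_ne_zero_two_mul (sub_eq_self.1 h), fun j hj => ?_⟩
    rw [show k - a j = k - 1 - a j + 1 by ring, inHalf_add_one]
    exact Or.inr ⟨hj, hS.sub_ne (hk hA) ⟨j, rfl⟩⟩
  · refine ⟨k + 1, (add_ne_left).2 one_ne_zero_two_mul, fun j hj => ?_⟩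
    rw [add_sub_right_comm, inHalf_add_one] at hj
    exact (hj.resolve_left fun h => hA ⟨j, (sub_eq_zero.1 h).symm⟩).1

lemma IsAntipodalTransversal.mem_localMins_iff (hS : IsAntipodalTransversal a)
    {k : ZMod (2 * t)} :
    k ∈ localMins a ↔ ∀ m, (∀ j, InHalf (m - a j) → InHalf (k - a j)) → m = k := by
  refine ⟨fun hk m hsub => ?_, fun h => ?_⟩
  · by_contra hne
    obtain ⟨j, hm, hk'⟩ := hS.exists_inHalf_of_mem_localMins hk hne
    exact hk' (hsub j hm)
  · by_contra hk
    obtain ⟨m, hne, hsub⟩ := hS.exists_ne_inHalf_imp_of_not_mem_localMins hk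
    exact hne (h m hsub)

open Classical in
lemma IsAntipodalTransversal.indicator_localMins_add_t_sub (hS : IsAntipodalTransversal a)
    (y : ZMod (2 * t)) :
    ((if y + t ∈ localMins a then 1 else 0) - if y ∈ localMins a then 1 else 0 : ℝ) =
      (if y - 1 ∈ Set.range a then 1 else 0) - if y ∈ Set.range a then 1 else 0 := by
  simp only [mem_localMins, add_sub_right_comm y, hS y, hS (y - 1)]
  split_ifs <;> first | tauto | norm_num

lemma IsAntipodalTransversal.sum_localMins_tope (hS : IsAntipodalTransversal a) (j : ι) :
    ∑ k ∈ localMins a, tope a k j = 1 := by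
  classical
  let g : ℕ → ℝ := fun i => if a j + i ∈ Set.range a then 1 else 0
  -- `a j + 1 + i` for `i < t` runs over the half-circle where coordinate `j` is negative.
  have hpair : ∀ i ∈ range t, (if a j + 1 + i ∈ localMins a then tope a (a j + 1 + i) j else 0) +
      (if a j + 1 + i + t ∈ localMins a then tope a (a j + 1 + i + t) j else 0) =
      g i - g (i + 1) := by
    intro i hi
    have hneg : tope a (a j + 1 + i) j = -1 := by
      rw [tope_eq_neg_one_iff, add_assoc, add_sub_cancel_left]
      have := mem_range.1 hi
      exact_mod_cast inHalf_natCast (t := t) (c := 1 + i) (by omega) (by omega)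
    have hpos : tope a (a j + 1 + i + t) j = 1 := by rw [tope_add_t, Pi.neg_apply, hneg, neg_neg]
    have hg : g i - g (i + 1) = (if a j + 1 + i - 1 ∈ Set.range a then 1 else 0) -
        if a j + 1 + i ∈ Set.range a then 1 else 0 := by
      simp only [g, Nat.cast_succ, add_sub_cancel_right, add_right_comm _ (1 : ZMod (2 * t)),
        ← add_assoc]
    rw [hneg, hpos, hg, ← hS.indicator_localMins_add_t_sub]
    split_ifs <;> norm_num
  rw [← univ_inter (localMins a), ← sum_ite_mem, sum_eq_sum_range_add_t _ (a j + 1),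
    sum_congr rfl hpair, sum_range_sub']
  simp only [g, Nat.cast_zero, add_zero, Set.mem_range_self, if_true, hS (a j)]
  norm_num

lemma two_mul_sum_card_inHalf_add_card {E : Finset (ZMod (2 * t))}
    (hE : ∀ k ∈ E, ∀ m ∈ E, k - m ≠ t) :
    2 * ∑ m ∈ E, #{k ∈ E | InHalf (k - m)} + #E = #E * #E := by
  have hrow : ∀ m ∈ E, #{k ∈ E | InHalf (k - m)} + #{k ∈ E | InHalf (m - k)} + 1 = #E := by
    intro m hm
    have h : ∑ k ∈ E, ((if InHalf (k - m) then 1 else 0) + (if InHalf (m - k) then 1 else 0) +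
        (if m = k then 1 else 0)) = ∑ k ∈ E, 1 := by
      refine sum_congr rfl fun k hk => ?_
      by_cases hkm : m = k
      · subst hkm; simp [sub_self, not_inHalf_zero]
      · simp only [← neg_sub k m, inHalf_neg (sub_ne_zero.2 (Ne.symm hkm)) (hE k hk m hm),
          if_neg hkm]
        split_ifs <;> simp
    rwa [sum_add_distrib, sum_add_distrib, sum_ite_eq, if_pos hm, ← card_filter, ← card_filter,
      ← card_eq_sum_ones] at h
  have hswap : ∑ m ∈ E, #{k ∈ E | InHalf (k - m)} = ∑ m ∈ E, #{k ∈ E | InHalf (m - k)} := by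
    simp only [card_filter]
    exact sum_comm
  calc 2 * ∑ m ∈ E, #{k ∈ E | InHalf (k - m)} + #E
      = ∑ m ∈ E, (#{k ∈ E | InHalf (k - m)} + #{k ∈ E | InHalf (m - k)} + 1) := by
        rw [sum_add_distrib, sum_add_distrib, ← hswap, two_mul, card_eq_sum_ones E]
    _ = ∑ m ∈ E, #E := sum_congr rfl hrow
    _ = #E * #E := by rw [sum_const, smul_eq_mul]

lemma IsAntipodalTransversal.exists_sum_tope_pos (hS : IsAntipodalTransversal a)
    {E : Finset (ZMod (2 * t))} (hE : ∀ k ∈ E, k ∈ Set.range a) (hne : E.Nonempty) :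
    ∃ j, 0 < ∑ k ∈ E, tope a k j := by
  by_contra! h
  have hrow : ∀ m ∈ E, #E ≤ 2 * #{k ∈ E | InHalf (k - m)} := by
    intro m hm
    obtain ⟨j, rfl⟩ := hE m hm
    have := h j
    rw [sum_tope_apply] at this
    exact_mod_cast (by linarith : (#E : ℝ) ≤ 2 * #{k ∈ E | InHalf (k - a j)})
  have hsum := sum_le_sum hrow
  rw [sum_const, smul_eq_mul, ← mul_sum] at hsum
  have := two_mul_sum_card_inHalf_add_card fun k hk m hm => hS.sub_ne (hE k hk) (hE m hm)
  have := hne.card_pos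
  omega

lemma IsAntipodalTransversal.filter_minimal_eq_image_localMins [Fintype ι] [DecidableEq ι]
    (hS : IsAntipodalTransversal a) {V : Finset (ι → ℝ)} (hV : V = univ.image (tope a)) :
    V.filter (fun O => ∀ P ∈ V,
      (univ.filter fun e => P e = -1) ⊆ (univ.filter fun e => O e = -1) → P = O) =
      (localMins a).image (tope a) := by
  subst hV
  have hsub (m k : ZMod (2 * t)) : (univ.filter fun e => tope a m e = -1) ⊆
      (univ.filter fun e => tope a k e = -1) ↔ ∀ j, InHalf (m - a j) → InHalf (k - a j) := by
    simp only [subset_iff, mem_filter, mem_univ, true_and, tope_eq_neg_one_iff]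
  ext q
  simp only [mem_filter, mem_image, mem_univ, true_and, forall_exists_index,
    forall_apply_eq_imp_iff]
  constructor
  · rintro ⟨⟨k, rfl⟩, h⟩
    exact ⟨k, hS.mem_localMins_iff.2 fun m hm => hS.tope_injective (h m ((hsub m k).2 hm)), rfl⟩
  · rintro ⟨k, hk, rfl⟩
    exact ⟨⟨k, rfl⟩, fun m hm => congrArg _ (hS.mem_localMins_iff.1 hk m ((hsub m k).1 hm))⟩

end Topes

lemma not_forall_one_le_sum_of_ssubset {ι : Type*} {C K : Finset (ι → ℝ)}
    (hC : ∀ j, ∑ q ∈ C, q j = 1) (hpos : ∀ D ⊆ C, D.Nonempty → ∃ j, 0 < ∑ q ∈ D, q j)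
    (hK : K ⊂ C) : ¬∀ j, 1 ≤ ∑ q ∈ K, q j := by
  classical
  intro hge
  obtain ⟨j, hj⟩ := hpos (C \ K) sdiff_subset (sdiff_nonempty.2 hK.2)
  have := sum_sdiff hK.subset (f := fun q => q j)
  linarith [hC j, hge j]

section FlipSequence

variable {ι : Type*}

lemma eq_neg_of_ne_of_eq_neg_one_or_eq_one {u v : ℝ} (hu : u = -1 ∨ u = 1) (hv : v = -1 ∨ v = 1)
    (h : u ≠ v) : v = -u := by
  rcases hu with rfl | rfl <;> rcases hv with rfl | rfl <;> first | exact absurd rfl h | norm_num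

lemma apply_eq_ite_of_flips {n : ℕ} {R : Fin (n + 1) → ι → ℝ}
    (hsign : ∀ k j, R k j = -1 ∨ R k j = 1) (l : Fin n ≃ ι)
    (hstep : ∀ k j, R k.castSucc j ≠ R k.succ j ↔ j = l k) (k : Fin (n + 1)) (j : ι) :
    R k j = if (k : ℕ) ≤ l.symm j then R 0 j else -R 0 j := by
  induction k using Fin.induction with
  | zero => simp
  | succ i ih =>
    rw [Fin.val_castSucc] at ih
    by_cases hj : j = l i
    · rw [eq_neg_of_ne_of_eq_neg_one_or_eq_one (hsign _ j) (hsign _ j) ((hstep i j).2 hj), ih, hj,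
        Equiv.symm_apply_apply]
      simp
    · have hm : (i : ℕ) ≠ l.symm j := fun h => hj (by rw [Fin.ext h, Equiv.apply_symm_apply])
      rw [← not_not.1 (mt (hstep i j).1 hj), ih, Fin.val_succ]
      split_ifs <;> first | rfl | omega

variable {t : ℕ} {R : Fin (t + 1) → ι → ℝ}

/-- The step after which coordinate `j` turns from `1` to `-1` in the cycle
`R^0, …, R^{t-1}, -R^0, …, -R^{t-1}`. -/
noncomputable def flipPositions (R : Fin (t + 1) → ι → ℝ) (l : Fin t ≃ ι) (j : ι) :
    ZMod (2 * t) :=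
  (l.symm j : ℕ) + if R 0 j = 1 then 0 else (t : ZMod (2 * t))

variable [NeZero t]

lemma val_flipPositions (l : Fin t ≃ ι) (j : ι) :
    (flipPositions R l j).val = l.symm j + if R 0 j = 1 then 0 else t := by
  have := (l.symm j).isLt
  unfold flipPositions
  split_ifs
  · rw [add_zero, val_natCast_of_le this.le, add_zero]
  · rw [← Nat.cast_add, ZMod.val_natCast_of_lt (by omega)]

lemma isAntipodalTransversal_flipPositions [Fintype ι] (l : Fin t ≃ ι) :
    IsAntipodalTransversal (flipPositions R l) := by
  refine isAntipodalTransversal_of_injective (by simp [← Fintype.card_congr l])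
    (fun i j h => ?_) (fun i j h => ?_)
  · have hij := congrArg ZMod.val h
    have := (l.symm i).isLt
    have := (l.symm j).isLt
    rw [val_flipPositions, val_flipPositions] at hij
    exact l.symm.injective (Fin.ext (by split_ifs at hij <;> omega))
  · have hij := congrArg ZMod.val h
    have := (l.symm i).isLt
    have := (l.symm j).isLt
    rw [ZMod.val_add_eq_ite, val_flipPositions, val_flipPositions, val_natCast_of_le le_rfl] at hij
    obtain rfl : i = j := l.symm.injective (Fin.ext (by split_ifs at hij <;> omega))
    split_ifs at hij <;> omega

lemma tope_flipPositions (hsign : ∀ k j, R k j = -1 ∨ R k j = 1) (l : Fin t ≃ ι)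
    (hstep : ∀ k j, R k.castSucc j ≠ R k.succ j ↔ j = l k) (k : Fin t) :
    tope (flipPositions R l) (k : ℕ) = R k.castSucc := by
  ext j
  rw [apply_eq_ite_of_flips hsign l hstep, Fin.val_castSucc]
  have hk := inHalf_natCast_sub_natCast (t := t) k.isLt (l.symm j).isLt
  rcases hsign 0 j with h | h
  · have hk' : InHalf (((k : ℕ) : ZMod (2 * t)) -
        (((l.symm j : ℕ) : ZMod (2 * t)) + (t : ZMod (2 * t)))) ↔ (k : ℕ) ≤ l.symm j := by
      rw [sub_add_natCast_t, inHalf_add_t, hk, not_lt]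
    simp only [tope, flipPositions, h, show (-1 : ℝ) ≠ 1 by norm_num, if_false, hk']
    split_ifs <;> norm_num
  · simp only [tope, flipPositions, h, if_true, add_zero, hk]
    split_ifs <;> first | omega | norm_num

lemma image_topes_of_flips [Fintype ι] [DecidableEq (ι → ℝ)]
    (hsign : ∀ k j, R k j = -1 ∨ R k j = 1) (l : Fin t ≃ ι)
    (hstep : ∀ k j, R k.castSucc j ≠ R k.succ j ↔ j = l k) :
    univ.image (fun k : Fin t => R k.castSucc) ∪ univ.image (fun k : Fin t => -R k.castSucc) =
      univ.image (tope (flipPositions R l)) := by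
  ext q
  simp only [mem_union, mem_image, mem_univ, true_and]
  constructor
  · rintro (⟨k, rfl⟩ | ⟨k, rfl⟩)
    · exact ⟨k, tope_flipPositions hsign l hstep k⟩
    · exact ⟨(k : ℕ) + t, by rw [tope_add_t, tope_flipPositions hsign l hstep k]⟩
  · rintro ⟨x, rfl⟩
    obtain ⟨k, hk, rfl | rfl⟩ := exists_natCast_eq_or_eq_add_t x
    · exact Or.inl ⟨⟨k, hk⟩, (tope_flipPositions hsign l hstep ⟨k, hk⟩).symm⟩
    · exact Or.inr ⟨⟨k, hk⟩, by rw [tope_add_t, tope_flipPositions hsign l hstep ⟨k, hk⟩]⟩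

end FlipSequence

end TopeCycle

open TopeCycle

theorem stmt_13_general (t : ℕ) (ht : 0 < t)
    (R : Fin (t + 1) → Fin t → ℝ)
    (hsign : ∀ k j, R k j = -1 ∨ R k j = 1)
    (l : Fin t → Fin t) (hl : Function.Bijective l)
    (hstep : ∀ (k : Fin t) (j : Fin t), R k.castSucc j ≠ R k.succ j ↔ j = l k)
    (V : Finset (Fin t → ℝ))
    (hV : V = (Finset.univ.image fun k : Fin t => R k.castSucc)
        ∪ (Finset.univ.image fun k : Fin t => -(R k.castSucc)))
    (minV : Finset (Fin t → ℝ))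
    (hmin : minV = V.filter fun O => ∀ P ∈ V,
      (Finset.univ.filter fun e => P e = -1) ⊆ (Finset.univ.filter fun e => O e = -1)
        → P = O) :
    (∑ q ∈ minV, q) = (fun _ => (1 : ℝ)) ∧
    ∀ K : Finset (Fin t → ℝ), K ⊂ minV → ¬ (∀ j : Fin t, 1 ≤ ∑ q ∈ K, q j) := by
  have : NeZero t := ⟨ht.ne'⟩
  let e := Equiv.ofBijective l hl
  have hS := isAntipodalTransversal_flipPositions (R := R) e
  have hminV : minV = (localMins (flipPositions R e)).image (tope (flipPositions R e)) := by
    rw [hmin, hS.filter_minimal_eq_image_localMins (hV.trans (image_topes_of_flips hsign e hstep))]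
  have hsum (j : Fin t) : ∑ q ∈ minV, q j = 1 := by
    rw [hminV, sum_image hS.tope_injective.injOn]
    exact hS.sum_localMins_tope j
  refine ⟨funext fun j => by rw [Finset.sum_apply, hsum],
    fun K hK => not_forall_one_le_sum_of_ssubset hsum (fun D hD hne => ?_) hK⟩
  obtain ⟨E, hE, rfl⟩ := subset_image_iff.1 (hminV ▸ hD)
  simp only [sum_image hS.tope_injective.injOn]
  exact hS.exists_sum_tope_pos (fun k hk => (mem_localMins.1 (hE hk)).1) (image_nonempty.1 hne)

theorem stmt_13 (t : ℕ) (ht : 0 < t)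
    (R : Fin (t + 1) → Fin t → ℝ)
    (hsign : ∀ k j, R k j = -1 ∨ R k j = 1)
    (hRt : R (Fin.last t) = -(R 0))
    (l : Fin t → Fin t) (hl : Function.Bijective l)
    (hstep : ∀ (k : Fin t) (j : Fin t), R k.castSucc j ≠ R k.succ j ↔ j = l k)
    (V : Finset (Fin t → ℝ))
    (hV : V = (Finset.univ.image fun k : Fin t => R k.castSucc)
        ∪ (Finset.univ.image fun k : Fin t => -(R k.castSucc)))
    (minV : Finset (Fin t → ℝ))
    (hmin : minV = V.filter fun O => ∀ P ∈ V,
      (Finset.univ.filter fun e => P e = -1) ⊆ (Finset.univ.filter fun e => O e = -1)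
        → P = O) :
    (∑ q ∈ minV, q) = (fun _ => (1 : ℝ)) ∧
    ∀ K : Finset (Fin t → ℝ), K ⊂ minV → ¬ (∀ j : Fin t, 1 ≤ ∑ q ∈ K, q j) :=
  stmt_13_general t ht R hsign l hl hstep V hV minV hmin
end
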